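/- arXiv:2601.09454 — 9 statements merged into one kernel-verified Lean document; each statement's English description precedes it below -/
import Mathlib

section
/- For all integers n and i with 3 dividing i, 3 ≤ i, and i ≤ n − 1, the graph H_n^i is P_6^2-free and contains exactly i·(n − i) + i/3 triangles. -/
/-! The vertices `v < i` of `H_n^i` fall into blocks of three consecutive vertices, the other
vertices are pairwise non-adjacent, and vertices of different blocks are non-adjacent. In a copy
of `P_6^2` the vertices outside the blocks are therefore independent, and the complement of any
independent set of `P_6^2` contains an increasing path `a b c d` of `P_6^2`; its four vertices
would have to share a block.

A triangle is either a block, or an outside vertex `b` together with a block from which one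
vertex `a` has been removed. So the triangles correspond to the `i / 3` blocks and to the
`i (n - i)` pairs `(a, b)` with `a < i ≤ b`. -/

open SimpleGraph

/-- A graph is `P6SqFree` if it has no subgraph isomorphic to the square of the
path on six vertices (vertices `v_1, …, v_6`, edges `v_i v_j` whenever `j - i ≤ 2`). -/
def P6SqFree {V : Type*} (G : SimpleGraph V) : Prop :=
  ¬ ∃ f : Fin 6 → V, Function.Injective f ∧
      ∀ i j : Fin 6, (i : ℕ) < (j : ℕ) → (j : ℕ) ≤ (i : ℕ) + 2 → G.Adj (f i) (f j)

/-- The number of triangles of a finite graph. -/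
noncomputable def triCount {V : Type*} [Fintype V] [DecidableEq V] (G : SimpleGraph V) : ℕ :=
  have : DecidableRel G.Adj := Classical.decRel _
  (G.cliqueFinset 3).card

/-- The number of edges of a finite graph. -/
noncomputable def edgeCount {V : Type*} (G : SimpleGraph V) : ℕ :=
  G.edgeSet.ncard

/-- The function `g` from the paper. -/
def gfun (n : ℕ) : ℕ :=
  if n % 6 = 2 ∨ n % 6 = 3 then n / 6 - 1
  else if n % 6 = 5 then n / 6 + 1
  else n / 6

/-- The graph `H_n^i`: complete bipartite graph between `{0,…,i-1}` and the rest,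
together with `i/3` pairwise vertex-disjoint triangles inside the first part
(grouping the first part into consecutive triples). -/
def Hgraph (n i : ℕ) : SimpleGraph (Fin n) where
  Adj v w := v ≠ w ∧
    ((v.val < i ∧ ¬ w.val < i) ∨ (¬ v.val < i ∧ w.val < i) ∨
     (v.val < i ∧ w.val < i ∧ v.val / 3 = w.val / 3))
  symm := by
    constructor
    rintro v w ⟨hne, h⟩
    refine ⟨hne.symm, ?_⟩
    rcases h with h | h | h
    · exact Or.inr (Or.inl ⟨h.2, h.1⟩)
    · exact Or.inl ⟨h.2, h.1⟩
    · exact Or.inr (Or.inr ⟨h.2.1, h.1, h.2.2.symm⟩)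
  loopless := by constructor; intro v h; exact h.1 rfl

open Finset

lemma exists_chain_of_p6Sq_cover (p : Fin 6 → Prop)
    (hcover : ∀ j k : Fin 6, (j : ℕ) < k → (k : ℕ) ≤ j + 2 → p j ∨ p k) :
    ∃ a b c d : Fin 6,
      (a < b ∧ b < c ∧ c < d ∧ (b : ℕ) ≤ a + 2 ∧ (c : ℕ) ≤ b + 2 ∧ (d : ℕ) ≤ c + 2) ∧
      p a ∧ p b ∧ p c ∧ p d := by
  by_cases h2 : p 2 <;> by_cases h3 : p 3
  · obtain h0 | h1 := hcover 0 1 (by decide) (by decide) <;>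
      obtain h4 | h5 := hcover 4 5 (by decide) (by decide)
    exacts [⟨0, 2, 3, 4, by decide, h0, h2, h3, h4⟩, ⟨0, 2, 3, 5, by decide, h0, h2, h3, h5⟩,
      ⟨1, 2, 3, 4, by decide, h1, h2, h3, h4⟩, ⟨1, 2, 3, 5, by decide, h1, h2, h3, h5⟩]
  · exact ⟨1, 2, 4, 5, by decide, (hcover 1 3 (by decide) (by decide)).resolve_right h3, h2,
      (hcover 3 4 (by decide) (by decide)).resolve_left h3,
      (hcover 3 5 (by decide) (by decide)).resolve_left h3⟩
  · exact ⟨0, 1, 3, 4, by decide, (hcover 0 2 (by decide) (by decide)).resolve_right h2,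
      (hcover 1 2 (by decide) (by decide)).resolve_right h2, h3,
      (hcover 2 4 (by decide) (by decide)).resolve_left h2⟩
  · exact absurd ((hcover 2 3 (by decide) (by decide)).resolve_left h2) h3

namespace Hgraph

variable {n i q : ℕ} {v w : Fin n}

lemma adj_iff : (Hgraph n i).Adj v w ↔
    v ≠ w ∧ (v.val < i ∨ w.val < i) ∧ (v.val < i → w.val < i → v.val / 3 = w.val / 3) := by
  simp only [Hgraph]
  tauto

theorem p6SqFree (n i : ℕ) : P6SqFree (Hgraph n i) := by
  rintro ⟨f, hf, hadj⟩
  obtain ⟨a, b, c, d, ⟨hab, hbc, hcd, hab₂, hbc₂, hcd₂⟩, ha, hb, hc, hd⟩ :=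
    exists_chain_of_p6Sq_cover (fun k => (f k).val < i) fun j k hjk hkj =>
      (adj_iff.1 (hadj j k hjk hkj)).2.1
  have hblock {j k : Fin 6} (hjk : j < k) (hkj : (k : ℕ) ≤ j + 2) (hj : (f j).val < i)
      (hk : (f k).val < i) : (f j).val / 3 = (f k).val / 3 :=
    (adj_iff.1 (hadj j k hjk hkj)).2.2 hj hk
  have hne {j k : Fin 6} (hjk : j < k) : (f j).val ≠ (f k).val := Fin.val_ne_of_ne (hf.ne hjk.ne)
  have := hblock hab hab₂ ha hb
  have := hblock hbc hbc₂ hb hc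
  have := hblock hcd hcd₂ hc hd
  have := hne hab; have := hne (hab.trans hbc); have := hne (hab.trans (hbc.trans hcd))
  have := hne hbc; have := hne (hbc.trans hcd); have := hne hcd
  omega

def block (n i q : ℕ) : Finset (Fin n) := {v | v.val / 3 = q ∧ v.val < i}

@[simp]
lemma mem_block : v ∈ block n i q ↔ v.val / 3 = q ∧ v.val < i := by simp [block]

lemma card_block (h3 : 3 ∣ i) (hin : i ≤ n) (hq : q < i / 3) : #(block n i q) = 3 := by
  rw [card_eq_three]
  refine ⟨⟨3 * q, by omega⟩, ⟨3 * q + 1, by omega⟩, ⟨3 * q + 2, by omega⟩, by simp [Fin.ext_iff],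
    by simp [Fin.ext_iff], by simp [Fin.ext_iff], ?_⟩
  ext v
  simp only [mem_block, mem_insert, mem_singleton, Fin.ext_iff]
  omega

/-- `inr q` is the `q`-th block; `inl (a, b)` is the triangle formed by `b` and the two other
members of the block of `a`. -/
def triangleOf (n i : ℕ) : (Fin n × Fin n) ⊕ ℕ → Finset (Fin n)
  | .inl (a, b) => insert b ((block n i (a.val / 3)).erase a)
  | .inr q => block n i q

def triangleIndex (n i : ℕ) : Finset ((Fin n × Fin n) ⊕ ℕ) :=
  (({v | v.val < i} : Finset (Fin n)) ×ˢ ({v | ¬ v.val < i} : Finset (Fin n))).disjSum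
    (range (i / 3))

@[simp]
lemma inl_mem_triangleIndex {a b : Fin n} :
    .inl (a, b) ∈ triangleIndex n i ↔ a.val < i ∧ ¬ b.val < i := by
  simp [triangleIndex]

@[simp]
lemma inr_mem_triangleIndex : .inr q ∈ triangleIndex n i ↔ q < i / 3 := by
  simp [triangleIndex]

@[simp]
lemma mem_triangleOf_inl {a b : Fin n} : v ∈ triangleOf n i (.inl (a, b)) ↔
    v = b ∨ v ≠ a ∧ v.val / 3 = a.val / 3 ∧ v.val < i := by
  simp [triangleOf]

@[simp]
lemma triangleOf_inr : triangleOf n i (.inr q) = block n i q := rfl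

lemma card_triangleIndex (hin : i ≤ n) : #(triangleIndex n i) = i * (n - i) + i / 3 := by
  have hA : #{v : Fin n | v.val < i} = i := by
    rw [Fin.card_filter_val_lt, min_eq_right hin]
  have hB : #{v : Fin n | ¬ v.val < i} = n - i := by
    have := card_filter_add_card_filter_not (s := univ) (fun v : Fin n => v.val < i)
    rw [hA, card_univ, Fintype.card_fin] at this
    omega
  rw [triangleIndex, card_disjSum, card_product, hA, hB, card_range]

lemma isNClique_triangleOf (h3 : 3 ∣ i) (hin : i ≤ n) {x : (Fin n × Fin n) ⊕ ℕ}
    (hx : x ∈ triangleIndex n i) : (Hgraph n i).IsNClique 3 (triangleOf n i x) := by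
  rcases x with ⟨a, b⟩ | q
  · rw [inl_mem_triangleIndex] at hx
    refine ⟨fun u hu w hw huw => ?_, ?_⟩
    · rw [mem_coe, mem_triangleOf_inl] at hu hw
      refine adj_iff.2 ⟨huw, ?_, ?_⟩ <;> rcases hu with rfl | ⟨-, hu, hui⟩ <;>
        rcases hw with rfl | ⟨-, hw, hwi⟩ <;> omega
    · have ha : a ∈ block n i (a.val / 3) := mem_block.2 ⟨rfl, hx.1⟩
      rw [triangleOf, card_insert_of_notMem (fun hb => hx.2 (mem_block.1 (mem_of_mem_erase hb)).2),
        card_erase_of_mem ha, card_block h3 hin (by omega)]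
  · rw [inr_mem_triangleIndex] at hx
    refine ⟨fun u hu w hw huw => ?_, card_block h3 hin hx⟩
    rw [mem_coe, triangleOf_inr, mem_block] at hu hw
    exact adj_iff.2 ⟨huw, by omega, by omega⟩

lemma injOn_triangleOf (h3 : 3 ∣ i) (hin : i ≤ n) :
    Set.InjOn (triangleOf n i) (triangleIndex n i) := by
  rintro (⟨a, b⟩ | q) hx (⟨a', b'⟩ | q') hy heq <;>
    simp only [mem_coe, inl_mem_triangleIndex, inr_mem_triangleIndex] at hx hy
  · -- compare membership of `b`, of `a`, and of another member `c` of the block of `a`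
    obtain ⟨c, hc_val⟩ : ∃ c : Fin n, c.val = 3 * (a.val / 3) + (a.val + 1) % 3 :=
      ⟨⟨_, by omega⟩, rfl⟩
    have hb := Finset.ext_iff.1 heq b
    have ha := Finset.ext_iff.1 heq a
    have hc := Finset.ext_iff.1 heq c
    simp only [mem_triangleOf_inl, ne_eq, Fin.ext_iff, true_or, true_iff, not_true_eq_false,
      true_and, false_and, or_false] at hb ha hc
    simp only [Sum.inl.injEq, Prod.ext_iff, Fin.ext_iff]
    omega
  · have hb : b ∈ triangleOf n i (.inr q') := heq ▸ mem_insert_self b _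
    exact absurd (mem_block.1 hb).2 hx.2
  · have hb' : b' ∈ triangleOf n i (.inr q) := heq ▸ mem_insert_self b' _
    exact absurd (mem_block.1 hb').2 hy.2
  · obtain ⟨v, hv⟩ : ∃ v : Fin n, v.val = 3 * q := ⟨⟨_, by omega⟩, rfl⟩
    have hv' : v ∈ triangleOf n i (.inr q') := heq ▸ mem_block.2 ⟨by omega, by omega⟩
    rw [show q = q' by have := (mem_block.1 hv').1; omega]

lemma exists_triangleOf_eq (h3 : 3 ∣ i) (hin : i ≤ n) {t : Finset (Fin n)}
    (ht : (Hgraph n i).IsNClique 3 t) : ∃ x ∈ triangleIndex n i, triangleOf n i x = t := by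
  have hadj {u w : Fin n} (hu : u ∈ t) (hw : w ∈ t) (huw : u ≠ w) :=
    adj_iff.1 (ht.isClique hu hw huw)
  by_cases hB : ∃ b ∈ t, ¬ b.val < i
  · obtain ⟨b, hbt, hb⟩ := hB
    obtain ⟨u, w, huw, hpair⟩ : ∃ u w, u ≠ w ∧ t.erase b = {u, w} := by
      rw [← card_eq_two, card_erase_of_mem hbt, ht.card_eq]
    have hu : u ∈ t.erase b := by simp [hpair]
    have hw : w ∈ t.erase b := by simp [hpair]
    obtain ⟨hub, hut⟩ := mem_erase.1 hu
    obtain ⟨hwb, hwt⟩ := mem_erase.1 hw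
    have hui := (hadj hbt hut hub.symm).2.1.resolve_left hb
    have hwi := (hadj hbt hwt hwb.symm).2.1.resolve_left hb
    have huw₃ := (hadj hut hwt huw).2.2 hui hwi
    -- the block `{3q, 3q+1, 3q+2}` of `u` and `w` sums to `9q + 3`, so `c` is its third member
    obtain ⟨c, hc⟩ : ∃ c : Fin n, c.val = 9 * (u.val / 3) + 3 - u.val - w.val :=
      ⟨⟨_, by omega⟩, rfl⟩
    refine ⟨.inl (c, b), inl_mem_triangleIndex.2 ⟨by omega, hb⟩, ?_⟩
    rw [← insert_erase hbt, hpair]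
    ext v
    simp only [mem_triangleOf_inl, mem_insert, mem_singleton, Fin.ext_iff]
    omega
  · push Not at hB
    obtain ⟨x, hx⟩ : t.Nonempty := by rw [← card_pos, ht.card_eq]; decide
    have hq : x.val / 3 < i / 3 := Nat.div_lt_div_of_lt_of_dvd h3 (hB x hx)
    refine ⟨.inr (x.val / 3), inr_mem_triangleIndex.2 hq, ?_⟩
    refine (eq_of_subset_of_card_le (fun y hy => mem_block.2 ⟨?_, hB y hy⟩) ?_).symm
    · rcases eq_or_ne x y with rfl | hxy
      exacts [rfl, ((hadj hx hy hxy).2.2 (hB x hx) (hB y hy)).symm]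
    · rw [card_block h3 hin hq, ht.card_eq]

theorem triCount_eq (h3 : 3 ∣ i) (hin : i ≤ n) :
    triCount (Hgraph n i) = i * (n - i) + i / 3 := by
  classical
  rw [triCount, ← card_triangleIndex hin]
  refine (card_nbij (triangleOf n i) (fun x hx => ?_) (injOn_triangleOf h3 hin) fun t ht => ?_).symm
  · exact mem_cliqueFinset_iff.2 (isNClique_triangleOf h3 hin hx)
  · exact exists_triangleOf_eq h3 hin (mem_cliqueFinset_iff.1 ht)

end Hgraph

theorem stmt1_general (n i : ℕ) (h3 : 3 ∣ i) (hin : i ≤ n - 1) :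
    P6SqFree (Hgraph n i) ∧ triCount (Hgraph n i) = i * (n - i) + i / 3 :=
  ⟨Hgraph.p6SqFree n i, Hgraph.triCount_eq h3 (by omega)⟩

/-- For `3 ∣ i`, `3 ≤ i ≤ n - 1`, the graph `H_n^i` is `P_6^2`-free and contains
exactly `i (n - i) + i / 3` triangles. -/
theorem stmt1 (n i : ℕ) (h3 : 3 ∣ i) (hi : 3 ≤ i) (hin : i ≤ n - 1) :
    P6SqFree (Hgraph n i) ∧ triCount (Hgraph n i) = i * (n - i) + i / 3 :=
  stmt1_general n i h3 hin
end

section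
/- Let G be a P_6^2-free graph and let x, y, z, w be distinct vertices such that {x,y,z} and {x,y,w} are triangles of G and the edge yz is contained in at least 4 triangles of G. Then the pair {x,w} is contained in at most 2 triangles of G. -/
open SimpleGraph

theorem P6SqFree.false_of_squarePath {V : Type*} {G : SimpleGraph V} (hG : P6SqFree G)
    {v₀ v₁ v₂ v₃ v₄ v₅ : V}
    (h₀₁ : G.Adj v₀ v₁) (h₀₂ : G.Adj v₀ v₂) (h₁₂ : G.Adj v₁ v₂) (h₁₃ : G.Adj v₁ v₃)
    (h₂₃ : G.Adj v₂ v₃) (h₂₄ : G.Adj v₂ v₄) (h₃₄ : G.Adj v₃ v₄) (h₃₅ : G.Adj v₃ v₅)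
    (h₄₅ : G.Adj v₄ v₅)
    (n₀₃ : v₀ ≠ v₃) (n₀₄ : v₀ ≠ v₄) (n₀₅ : v₀ ≠ v₅) (n₁₄ : v₁ ≠ v₄) (n₁₅ : v₁ ≠ v₅)
    (n₂₅ : v₂ ≠ v₅) : False := by
  refine hG ⟨![v₀, v₁, v₂, v₃, v₄, v₅], ?_, ?_⟩
  · rw [← List.nodup_ofFn]
    simp [h₀₁.ne, h₀₂.ne, h₁₂.ne, h₁₃.ne, h₂₃.ne,
      h₂₄.ne, h₃₄.ne, h₃₅.ne, h₄₅.ne, n₀₃, n₀₄, n₀₅, n₁₄, n₁₅, n₂₅]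
  · intro i j hij hji
    fin_cases i <;> fin_cases j <;> first | assumption | (simp at hij hji)

theorem exists_mem_notMem_of_card_lt_ncard {α : Type*} {s : Set α} (t : Finset α)
    (h : t.card < s.ncard) : ∃ a ∈ s, a ∉ t :=
  Set.exists_mem_notMem_of_ncard_lt_ncard (s := (t : Set α)) (by rwa [Set.ncard_coe_finset])

theorem stmt4_general {V : Type*} (G : SimpleGraph V) (hfree : P6SqFree G)
    (x y z w : V) (hdist : List.Pairwise (· ≠ ·) [x, y, z, w])
    (hxy : G.Adj x y) (hyz : G.Adj y z) (hxz : G.Adj x z)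
    (hxw : G.Adj x w) (hyw : G.Adj y w)
    (h4 : 4 ≤ {v : V | G.Adj y v ∧ G.Adj z v}.ncard) :
    {v : V | G.Adj x v ∧ G.Adj w v}.ncard ≤ 2 := by
  classical
  by_contra! h3
  have hzw : z ≠ w := by simp_all
  obtain ⟨b, ⟨hxb, hwb⟩, hb⟩ := exists_mem_notMem_of_card_lt_ncard {y, z}
    (Finset.card_le_two.trans_lt h3)
  obtain ⟨a, ⟨hya, hza⟩, ha⟩ := exists_mem_notMem_of_card_lt_ncard {x, w, b}
    (Finset.card_le_three.trans_lt h4)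
  simp only [Finset.mem_insert, Finset.mem_singleton, not_or] at ha hb
  exact hfree.false_of_squarePath hza.symm hya.symm hyz.symm hxz.symm hxy.symm hyw hxw hxb hwb
    ha.1 ha.2.1 ha.2.2 hzw (Ne.symm hb.2) (Ne.symm hb.1)

/-- If `{x,y,z}` and `{x,y,w}` are triangles of a `P_6^2`-free graph and the edge `yz`
lies in at least `4` triangles, then the pair `{x,w}` lies in at most `2` triangles. -/
theorem stmt4 {V : Type*} [Fintype V] (G : SimpleGraph V) (hfree : P6SqFree G)
    (x y z w : V) (hdist : List.Pairwise (· ≠ ·) [x, y, z, w])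
    (hxy : G.Adj x y) (hyz : G.Adj y z) (hxz : G.Adj x z)
    (hxw : G.Adj x w) (hyw : G.Adj y w)
    (h4 : 4 ≤ {v : V | G.Adj y v ∧ G.Adj z v}.ncard) :
    {v : V | G.Adj x v ∧ G.Adj w v}.ncard ≤ 2 :=
  stmt4_general G hfree x y z w hdist hxy hyz hxz hxw hyw h4
end

section
/- Let n ≥ 11 with n ≡ 2 or 4 (mod 6) (in particular n is even), and let G be a triangle-free graph on n vertices with e(G) ≥ n²/4 − 1. Then G is isomorphic to the complete bipartite graph K_{n/2, n/2}, or to K_{n/2, n/2} with one edge deleted, or to the complete bipartite graph K_{n/2 − 1, n/2 + 1}. -/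
open SimpleGraph

/-! Write `n = 2k`. Let `u` be a vertex of maximum degree and `A` its neighbourhood, independent
as `G` is triangle-free; put `B = Aᶜ` and let `M` count the non-adjacent pairs in `B × A`.
From `e ≤ k |A|` we get `|A| ≥ k`, and `|A||B| = k² - (|A| - k)²`. Double counting degrees, with
`deg v ≤ |A|` for `v ∈ B`, gives `2e + M ≤ 2|A||B|`, so `e ≥ k² - 1` forces `|A| ≤ k + 1` and
`M ≤ 2`. The endpoints of an edge inside `B` have disjoint neighbourhoods in `A`, so such an edge
would give `M ≥ |A| ≥ 3`; hence `B` is independent too, `e + M = |A||B|`, and `M ≤ 1` if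
`|A| = k`, `M = 0` if `|A| = k + 1`. -/

namespace SimpleGraph

open Finset

variable {V W : Type*}

def completeBipartiteOn (p : V → Prop) : SimpleGraph V where
  Adj x y := Xor (p x) (p y)
  symm := ⟨fun x y => (xor_comm (p x) (p y)).mp⟩
  loopless := ⟨fun x => by simp⟩

def completeBipartiteOnIso (p : V → Prop) [DecidablePred p] :
    completeBipartiteOn p ≃g completeBipartiteGraph {x // p x} {x // ¬ p x} where
  toEquiv := (Equiv.sumCompl p).symm
  map_rel_iff' {x y} := by
    by_cases hx : p x <;> by_cases hy : p y <;>
      simp [completeBipartiteOn, hx, hy, Equiv.sumCompl_symm_apply_of_pos,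
        Equiv.sumCompl_symm_apply_of_neg]

def Iso.deleteEdges {G : SimpleGraph V} {H : SimpleGraph W} (φ : G ≃g H) (s : Set (Sym2 V)) :
    G.deleteEdges s ≃g H.deleteEdges (Sym2.map φ '' s) where
  toEquiv := φ.toEquiv
  map_rel_iff' {x y} := by
    change (H.deleteEdges _).Adj (φ x) (φ y) ↔ _
    rw [deleteEdges_adj, deleteEdges_adj, φ.map_adj_iff, ← Sym2.map_mk,
      (Sym2.map.injective φ.injective).mem_set_image]

theorem nonempty_iso_completeBipartiteOn [Fintype V] (p : V → Prop) [DecidablePred p] {a b : ℕ}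
    (ha : Fintype.card {x // p x} = a) (hb : Fintype.card {x // ¬ p x} = b) :
    Nonempty (completeBipartiteOn p ≃g completeBipartiteGraph (Fin a) (Fin b)) :=
  ⟨(completeBipartiteOnIso p).trans
    (completeBipartiteGraphCongr (Fintype.equivFinOfCardEq ha) (Fintype.equivFinOfCardEq hb))⟩

section

variable [Fintype V] (G : SimpleGraph V) [DecidableRel G.Adj]

theorem two_mul_card_edgeFinset_le_card_mul_maxDegree :
    2 * #G.edgeFinset ≤ Fintype.card V * G.maxDegree := by
  rw [← sum_degrees_eq_twice_card_edges, ← smul_eq_mul, ← card_univ, ← sum_const]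
  exact sum_le_sum fun v _ => G.degree_le_maxDegree v

variable [DecidableEq V] {A : Finset V}

def crossNonAdj (A : Finset V) : Finset (V × V) :=
  (Aᶜ ×ˢ A).filter fun p => ¬ G.Adj p.1 p.2

theorem card_crossNonAdj (A : Finset V) :
    #(G.crossNonAdj A) = ∑ v ∈ Aᶜ, #(A.filter fun w => ¬ G.Adj v w) := by
  simp only [crossNonAdj, card_filter, sum_product]

theorem degree_eq_card_filter_add_card_filter (A : Finset V) (v : V) :
    G.degree v = #(A.filter (G.Adj v)) + #(Aᶜ.filter (G.Adj v)) := by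
  rw [← card_neighborFinset_eq_degree, neighborFinset_eq_filter, card_filter, card_filter,
    card_filter, sum_add_sum_compl]

variable {G}

theorem sum_degree_eq_of_isIndepSet (hA : G.IsIndepSet A) :
    ∑ v ∈ A, G.degree v = ∑ w ∈ Aᶜ, #(A.filter (G.Adj w)) := by
  have hdeg : ∀ v ∈ A, G.degree v = #(Aᶜ.filter (G.Adj v)) := fun v hv => by
    rw [G.degree_eq_card_filter_add_card_filter A v, add_eq_right, card_eq_zero,
      filter_eq_empty_iff]
    exact fun w hw hvw => hA hv hw hvw.ne hvw
  rw [sum_congr rfl hdeg]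
  refine (sum_card_bipartiteAbove_eq_sum_card_bipartiteBelow (r := G.Adj)).trans ?_
  simp only [bipartiteBelow, G.adj_comm]

theorem two_mul_card_edgeFinset_add_two_mul_card_crossNonAdj (hA : G.IsIndepSet A) :
    2 * #G.edgeFinset + 2 * #(G.crossNonAdj A) =
      2 * (#Aᶜ * #A) + ∑ v ∈ Aᶜ, #(Aᶜ.filter (G.Adj v)) := by
  have hcross : ∑ v ∈ Aᶜ, #(A.filter (G.Adj v)) + #(G.crossNonAdj A) = #Aᶜ * #A := by
    rw [card_crossNonAdj, ← sum_add_distrib, ← smul_eq_mul, ← sum_const]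
    exact sum_congr rfl fun v _ => card_filter_add_card_filter_not _
  have hsplit : ∑ v ∈ Aᶜ, G.degree v =
      ∑ v ∈ Aᶜ, #(A.filter (G.Adj v)) + ∑ v ∈ Aᶜ, #(Aᶜ.filter (G.Adj v)) := by
    rw [← sum_add_distrib]
    exact sum_congr rfl fun v _ => G.degree_eq_card_filter_add_card_filter A v
  rw [← sum_degrees_eq_twice_card_edges, ← sum_add_sum_compl A, sum_degree_eq_of_isIndepSet hA]
  omega

theorem two_mul_card_edgeFinset_add_card_crossNonAdj_le (hA : G.IsIndepSet A)
    (hdeg : ∀ v, G.degree v ≤ #A) :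
    2 * #G.edgeFinset + #(G.crossNonAdj A) ≤ 2 * (#Aᶜ * #A) := by
  have hinner : ∑ v ∈ Aᶜ, #(Aᶜ.filter (G.Adj v)) ≤ #(G.crossNonAdj A) := by
    rw [card_crossNonAdj]
    refine sum_le_sum fun v _ => ?_
    have := card_filter_add_card_filter_not (s := A) (G.Adj v)
    have := G.degree_eq_card_filter_add_card_filter A v
    have := hdeg v
    omega
  have := two_mul_card_edgeFinset_add_two_mul_card_crossNonAdj hA
  omega

theorem card_edgeFinset_add_card_crossNonAdj (hA : G.IsIndepSet A)
    (hB : G.IsIndepSet (Aᶜ : Finset V)) :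
    #G.edgeFinset + #(G.crossNonAdj A) = #Aᶜ * #A := by
  have hinner : ∑ v ∈ Aᶜ, #(Aᶜ.filter (G.Adj v)) = 0 :=
    sum_eq_zero fun v hv => card_eq_zero.2 <| filter_eq_empty_iff.2 fun w hw hvw =>
      hB (mem_coe.2 hv) (mem_coe.2 hw) hvw.ne hvw
  have := two_mul_card_edgeFinset_add_two_mul_card_crossNonAdj hA
  omega

theorem card_le_card_crossNonAdj_of_adj (htf : G.CliqueFree 3) {x y : V} (hx : x ∉ A)
    (hy : y ∉ A) (hxy : G.Adj x y) : #A ≤ #(G.crossNonAdj A) := by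
  have hdisj : Disjoint (A.filter (G.Adj x)) (A.filter (G.Adj y)) :=
    disjoint_filter.2 fun z _ hxz hyz =>
      htf {x, y, z} (is3Clique_triple_iff.2 ⟨hxy, hxz, hyz⟩)
  have hfilter : #(A.filter (G.Adj x)) + #(A.filter (G.Adj y)) ≤ #A := by
    rw [← card_union_of_disjoint hdisj]
    exact card_le_card (union_subset (filter_subset _ _) (filter_subset _ _))
  have hpair : #(A.filter fun w => ¬ G.Adj x w) + #(A.filter fun w => ¬ G.Adj y w) ≤
      #(G.crossNonAdj A) := by
    rw [card_crossNonAdj, ← sum_pair (f := fun v => #(A.filter fun w => ¬ G.Adj v w)) hxy.ne]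
    exact sum_le_sum_of_subset (by simp [insert_subset_iff, hx, hy])
  have := card_filter_add_card_filter_not (s := A) (G.Adj x)
  have := card_filter_add_card_filter_not (s := A) (G.Adj y)
  omega

theorem eq_deleteEdges_crossNonAdj (hA : G.IsIndepSet A) (hB : G.IsIndepSet (Aᶜ : Finset V)) :
    G = (completeBipartiteOn (· ∉ A)).deleteEdges
      ((fun p : V × V => s(p.1, p.2)) '' G.crossNonAdj A) := by
  ext x y
  simp only [deleteEdges_adj, completeBipartiteOn, crossNonAdj, coe_filter, mem_product,
    mem_compl, Set.mem_image, Set.mem_ofPred_eq, Prod.exists, Sym2.eq_iff, not_exists, not_and]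
  by_cases hx : x ∈ A <;> by_cases hy : y ∈ A
  · exact iff_of_false (fun h => hA hx hy h.ne h) (by simp [hx, hy])
  · simp only [show Xor (x ∉ A) (y ∉ A) by simp [hx, hy], true_and]
    refine ⟨fun h a b ⟨_, hab⟩ => ?_, fun h => of_not_not fun hxy => ?_⟩
    · rintro (⟨rfl, rfl⟩ | ⟨rfl, rfl⟩)
      exacts [hab h, hab h.symm]
    · exact h y x ⟨⟨hy, hx⟩, fun h' => hxy h'.symm⟩ (Or.inr ⟨rfl, rfl⟩)
  · simp only [show Xor (x ∉ A) (y ∉ A) by simp [hx, hy], true_and]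
    refine ⟨fun h a b ⟨_, hab⟩ => ?_, fun h => of_not_not fun hxy => ?_⟩
    · rintro (⟨rfl, rfl⟩ | ⟨rfl, rfl⟩)
      exacts [hab h, hab h.symm]
    · exact h x y ⟨⟨hx, hy⟩, hxy⟩ (Or.inl ⟨rfl, rfl⟩)
  · exact iff_of_false (fun h => hB (mem_compl.2 hx) (mem_compl.2 hy) h.ne h) (by simp [hx, hy])

variable {p q : ℕ}

theorem nonempty_iso_completeBipartiteOn_notMem (hp : #Aᶜ = p) (hq : #A = q) :
    Nonempty (completeBipartiteOn (· ∉ A) ≃g completeBipartiteGraph (Fin p) (Fin q)) :=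
  nonempty_iso_completeBipartiteOn _
    (by simpa [Fintype.card_subtype_compl, card_compl] using hp) (by simpa using hq)

theorem nonempty_iso_completeBipartiteGraph_of_crossNonAdj_eq_empty (hA : G.IsIndepSet A)
    (hB : G.IsIndepSet (Aᶜ : Finset V)) (h : G.crossNonAdj A = ∅) (hp : #Aᶜ = p) (hq : #A = q) :
    Nonempty (G ≃g completeBipartiteGraph (Fin p) (Fin q)) := by
  rw [eq_deleteEdges_crossNonAdj hA hB, h, coe_empty, Set.image_empty, deleteEdges_empty]
  exact nonempty_iso_completeBipartiteOn_notMem hp hq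

theorem exists_iso_deleteEdges_completeBipartiteGraph_of_card_crossNonAdj_eq_one
    (hA : G.IsIndepSet A) (hB : G.IsIndepSet (Aᶜ : Finset V)) (h : #(G.crossNonAdj A) = 1)
    (hp : #Aᶜ = p) (hq : #A = q) :
    ∃ e ∈ (completeBipartiteGraph (Fin p) (Fin q)).edgeSet,
      Nonempty (G ≃g (completeBipartiteGraph (Fin p) (Fin q)).deleteEdges {e}) := by
  obtain ⟨φ⟩ := nonempty_iso_completeBipartiteOn_notMem hp hq
  obtain ⟨⟨v, w⟩, hvw⟩ := card_eq_one.1 h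
  have hmem : (v, w) ∈ G.crossNonAdj A := hvw ▸ mem_singleton_self _
  have hv : v ∉ A ∧ w ∈ A := by simpa using (mem_filter.1 hmem).1
  refine ⟨s(φ v, φ w), φ.map_adj_iff.2 (by simp [completeBipartiteOn, hv.1, hv.2]), ⟨?_⟩⟩
  rw [eq_deleteEdges_crossNonAdj hA hB, hvw]
  simpa using Iso.deleteEdges φ {s(v, w)}

end

theorem exists_bipartition_of_cliqueFree_three [Fintype V] [DecidableEq V] {G : SimpleGraph V}
    [DecidableRel G.Adj] {k : ℕ} (htf : G.CliqueFree 3)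
    (hcard : Fintype.card V = 2 * k) (hk : 3 ≤ k) (he : k * k ≤ #G.edgeFinset + 1) :
    ∃ A : Finset V, G.IsIndepSet A ∧ G.IsIndepSet (Aᶜ : Finset V) ∧
      (#A = k ∧ #(G.crossNonAdj A) ≤ 1 ∨ #A = k + 1 ∧ G.crossNonAdj A = ∅) := by
  have : Nonempty V := Fintype.card_pos_iff.1 (by omega)
  obtain ⟨u, hu⟩ := G.exists_maximal_degree_vertex
  set A := G.neighborFinset u
  have hA : G.IsIndepSet A := by
    rw [coe_neighborFinset]
    exact isIndepSet_neighborSet_of_triangleFree G htf u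
  have hAmax : #A = G.maxDegree := by rw [card_neighborFinset_eq_degree, hu]
  have hdeg : ∀ v, G.degree v ≤ #A := fun v => hAmax ▸ G.degree_le_maxDegree v
  have hsize : #A + #Aᶜ = 2 * k := by rw [card_add_card_compl, hcard]
  have hAk : k ≤ #A := by
    have := G.two_mul_card_edgeFinset_le_card_mul_maxDegree
    rw [hcard, ← hAmax] at this
    nlinarith
  obtain ⟨t, ht⟩ : ∃ t, #A = k + t := ⟨_, (Nat.add_sub_cancel' hAk).symm⟩
  have hprod : #Aᶜ * #A + t * t = k * k := by
    obtain ⟨s, hs⟩ : ∃ s, k = t + s := ⟨_, (Nat.add_sub_cancel' (by omega : t ≤ k)).symm⟩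
    rw [show #Aᶜ = s by omega, ht, hs]
    ring
  have hI := two_mul_card_edgeFinset_add_card_crossNonAdj_le hA hdeg
  have ht1 : t ≤ 1 := by nlinarith
  have hB : G.IsIndepSet (Aᶜ : Finset V) := fun x hx y hy _ hxy =>
    (card_le_card_crossNonAdj_of_adj htf (mem_compl.1 hx) (mem_compl.1 hy) hxy).not_gt
      (by nlinarith)
  have hII := card_edgeFinset_add_card_crossNonAdj hA hB
  refine ⟨A, hA, hB, ?_⟩
  interval_cases t
  · left; constructor <;> linarith
  · right; exact ⟨ht, card_eq_zero.1 (by linarith)⟩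

end SimpleGraph

open Finset in
/-- For `n ≥ 11` with `n ≡ 2, 4 (mod 6)`, every triangle-free graph on `n` vertices with
at least `n²/4 - 1` edges is `K_{n/2,n/2}`, `K_{n/2,n/2}` minus one edge, or
`K_{n/2-1,n/2+1}`. -/
theorem stmt5 (n : ℕ) (hn : 11 ≤ n) (hmod : n % 6 = 2 ∨ n % 6 = 4)
    (G : SimpleGraph (Fin n)) (htf : G.CliqueFree 3)
    (he : n ^ 2 / 4 - 1 ≤ edgeCount G) :
    Nonempty (G ≃g completeBipartiteGraph (Fin (n / 2)) (Fin (n / 2))) ∨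
    (∃ e ∈ (completeBipartiteGraph (Fin (n / 2)) (Fin (n / 2))).edgeSet,
      Nonempty (G ≃g (completeBipartiteGraph (Fin (n / 2)) (Fin (n / 2))).deleteEdges {e})) ∨
    Nonempty (G ≃g completeBipartiteGraph (Fin (n / 2 - 1)) (Fin (n / 2 + 1))) := by
  classical
  have hcard : Fintype.card (Fin n) = 2 * (n / 2) := by rw [Fintype.card_fin]; omega
  have hedges : n / 2 * (n / 2) ≤ #G.edgeFinset + 1 := by
    have hsq : n ^ 2 / 4 = n / 2 * (n / 2) := by
      obtain ⟨m, rfl⟩ : ∃ m, n = 2 * m := ⟨n / 2, by omega⟩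
      rw [Nat.mul_div_cancel_left m two_pos, show (2 * m) ^ 2 = 4 * (m * m) by ring,
        Nat.mul_div_cancel_left _ four_pos]
    rw [edgeCount, ← coe_edgeFinset, Set.ncard_coe_finset] at he
    omega
  obtain ⟨A, hA, hB, ⟨hAk, hM⟩ | ⟨hAk, hM⟩⟩ :=
    exists_bipartition_of_cliqueFree_three htf hcard (by omega) hedges
  all_goals have hBk : #Aᶜ = n - #A := by rw [card_compl, Fintype.card_fin]
  · rcases Nat.le_one_iff_eq_zero_or_eq_one.1 hM with hM | hM
    · exact .inl (nonempty_iso_completeBipartiteGraph_of_crossNonAdj_eq_empty hA hB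
        (card_eq_zero.1 hM) (by omega) hAk)
    · exact .inr (.inl (exists_iso_deleteEdges_completeBipartiteGraph_of_card_crossNonAdj_eq_one
        hA hB hM (by omega) hAk))
  · exact .inr (.inr (nonempty_iso_completeBipartiteGraph_of_crossNonAdj_eq_empty hA hB hM
      (by omega) hAk))
end

section
/- Let n ≥ 11 with n ≡ 3 (mod 6), and let G be a triangle-free graph on n vertices with e(G) ≥ ⌊n²/4⌋ − 2. Then G is obtained from the complete bipartite graph K_{⌊n/2⌋, ⌈n/2⌉} by deleting at most two edges, or G is isomorphic to the complete bipartite graph K_{⌊n/2⌋ − 1, ⌈n/2⌉ + 1}. -/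
/-!
A triangle-free graph on `n` vertices that is not bipartite has at most `⌊(n - 1)² / 4⌋ + 1`
edges. Take a shortest odd closed walk `C`: it has length `g ≥ 5` and no repeated vertex, and
minimality forces every vertex of the graph to have at most two neighbours on `C`. Counting degrees,
the edges meeting `C` number at most `2n - g`, and by Mantel's theorem at most `⌊(n - g)² / 4⌋`
edges avoid `C`.

For odd `n ≥ 9` this is less than `⌊n² / 4⌋ - 2`, so `G` is bipartite, with parts `a ≤ b`
say. Then `ab ≥ ⌊n² / 4⌋ - 2` forces `b - a ∈ {1, 3}`; when `b - a = 1`, `G` misses at most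
two edges of `K_{a,b}`, and when `b - a = 3` the bound is `ab` itself, so `G = K_{a,b}`.
-/

open SimpleGraph

open Finset

theorem edgeCount_eq_card_edgeFinset {V : Type*} (G : SimpleGraph V) [Fintype G.edgeSet] :
    edgeCount G = #G.edgeFinset := by
  rw [edgeCount, ← coe_edgeFinset, Set.ncard_coe_finset]

theorem Nat.two_mul_sub_add_sq_div_four_le {n g : ℕ} (hg : 5 ≤ g) (hgn : g ≤ n) :
    2 * n - g + (n - g) ^ 2 / 4 ≤ (n - 1) ^ 2 / 4 + 1 := by
  obtain ⟨m, rfl⟩ := Nat.exists_eq_add_of_le hgn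
  obtain ⟨t, rfl⟩ := Nat.exists_eq_add_of_le hg
  have hsq : (5 + t + m - 1) ^ 2 = (m + t) ^ 2 + 4 * (2 * (m + t) + 4) := by
    rw [show 5 + t + m - 1 = m + t + 4 by omega]; ring
  have hmono : m ^ 2 / 4 ≤ (m + t) ^ 2 / 4 :=
    Nat.div_le_div_right (Nat.pow_le_pow_left (by omega) 2)
  rw [hsq, Nat.add_mul_div_left _ _ (by norm_num), Nat.add_sub_cancel_left]
  omega

theorem Nat.eq_add_one_or_eq_add_three_of_sq_div_four_sub_two_le_mul {a b : ℕ} (hab : a ≤ b)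
    (hodd : (a + b) % 2 = 1) (h : (a + b) ^ 2 / 4 - 2 ≤ a * b) :
    (b = a + 1 ∧ a * b = (a + b) ^ 2 / 4) ∨ (b = a + 3 ∧ a * b + 2 = (a + b) ^ 2 / 4) := by
  obtain ⟨d, rfl⟩ := Nat.exists_eq_add_of_le hab
  have hsq : (a + (a + d)) ^ 2 / 4 = a * (a + d) + d ^ 2 / 4 := by
    rw [show (a + (a + d)) ^ 2 = 4 * (a * (a + d)) + d ^ 2 by ring, Nat.mul_add_div (by norm_num)]
  rw [hsq] at h ⊢
  have hd : d ≤ 3 := by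
    by_contra! hd
    have : 16 ≤ d ^ 2 := by nlinarith
    omega
  interval_cases d <;> omega

namespace SimpleGraph

variable {V : Type*} {G : SimpleGraph V}

def Walk.IsShortestOddClosedWalk {u : V} (w : G.Walk u u) : Prop :=
  Odd w.length ∧ ∀ (v : V) (p : G.Walk v v), Odd p.length → w.length ≤ p.length

theorem exists_isShortestOddClosedWalk (h : ∃ (v : V) (w : G.Walk v v), Odd w.length) :
    ∃ (u : V) (w : G.Walk u u), w.IsShortestOddClosedWalk := by
  classical
  have hex : ∃ ℓ, ∃ (v : V) (w : G.Walk v v), Odd w.length ∧ w.length = ℓ := by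
    obtain ⟨v, w, hw⟩ := h
    exact ⟨_, v, w, hw, rfl⟩
  obtain ⟨u, w, hw, hlen⟩ := Nat.find_spec hex
  exact ⟨u, w, hw, fun v p hp => hlen ▸ Nat.find_min' hex ⟨v, p, hp, rfl⟩⟩

namespace Walk.IsShortestOddClosedWalk

variable {u : V} {w : G.Walk u u}

/-- `p` closes up with each of the two arcs of `w` between its endpoints; the two closed walks
have total length `w.length + 2 * p.length`, which is odd, so exactly one of them is odd and hence
at least as long as `w`. -/
theorem detour (hw : w.IsShortestOddClosedWalk) {i j : ℕ} (hij : i ≤ j) (hj : j ≤ w.length)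
    (p : G.Walk (w.getVert i) (w.getVert j)) :
    (Even (j - i + p.length) → j - i ≤ p.length) ∧
      (Odd (j - i + p.length) → w.length ≤ j - i + p.length) := by
  have hodd := Nat.odd_iff.mp hw.1
  let around := (w.take i).append (p.append (w.drop j))
  let across := (((w.drop i).take (j - i)).copy rfl
    (by rw [drop_getVert, Nat.add_sub_cancel' hij])).append p.reverse
  have h_around : around.length = i + p.length + (w.length - j) := by
    simp [around]; omega
  have h_across : across.length = j - i + p.length := by
    simp [across]; omega
  refine ⟨fun he => ?_, fun ho => h_across ▸ hw.2 _ across (h_across ▸ ho)⟩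
  have := hw.2 _ around (by rw [h_around, Nat.odd_iff]; rw [Nat.even_iff] at he; omega)
  omega

theorem getVert_injOn (hw : w.IsShortestOddClosedWalk) :
    Set.InjOn w.getVert (Set.Iio w.length) := by
  have hne (i j : ℕ) (hij : i < j) (hj : j < w.length) : w.getVert i ≠ w.getVert j := by
    intro h
    have := hw.detour hij.le hj.le (Walk.nil.copy rfl h)
    rcases Nat.even_or_odd (j - i) with h | h <;> simp_all <;> omega
  intro i hi j hj hij
  rcases lt_trichotomy i j with h | h | h
  · exact absurd hij (hne i j h hj)
  · exact h
  · exact absurd hij.symm (hne j i h hi)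

theorem five_le_length (hw : w.IsShortestOddClosedWalk) (hG : G.CliqueFree 3) :
    5 ≤ w.length := by
  classical
  obtain ⟨k, hk⟩ := hw.1
  have hlast : w.getVert (2 * k + 1) = w.getVert 0 := by
    rw [← hk, getVert_length, getVert_zero]
  have h01 := w.adj_getVert_succ (i := 0) (by omega)
  rcases Nat.lt_or_ge k 2 with hk2 | hk2
  · interval_cases k
    · simp only [zero_add, hlast] at h01
      exact absurd h01 (G.loopless.irrefl _)
    · have h12 := w.adj_getVert_succ (i := 1) (by omega)
      have h20 := w.adj_getVert_succ (i := 2) (by omega)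
      rw [hlast] at h20
      exact absurd (is3Clique_triple_iff.mpr ⟨h01, h20.symm, h12⟩) (hG _)
  · omega

theorem sub_eq_two_or_eq_length_sub_two_of_adj (hw : w.IsShortestOddClosedWalk) {x : V}
    {i j : ℕ} (hij : i < j) (hj : j < w.length) (hxi : G.Adj x (w.getVert i))
    (hxj : G.Adj x (w.getVert j)) :
    j - i = 2 ∨ j - i = w.length - 2 := by
  have h := hw.detour hij.le hj.le (.cons hxi.symm (.cons hxj .nil))
  have hodd := Nat.odd_iff.mp hw.1
  simp only [length_cons, length_nil, Nat.even_iff, Nat.odd_iff] at h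
  omega

theorem card_neighborFinset_inter_le_two [Fintype V] [DecidableEq V] [DecidableRel G.Adj]
    (hw : w.IsShortestOddClosedWalk) (hG : G.CliqueFree 3) (x : V) :
    #(G.neighborFinset x ∩ (range w.length).image w.getVert) ≤ 2 := by
  rw [neighborFinset_eq_filter, filter_inter, univ_inter, filter_image]
  set I := (range w.length).filter (fun i => G.Adj x (w.getVert i))
  refine card_image_le.trans (not_lt.mp fun h3 => ?_)
  have h5 := hw.five_le_length hG
  have hodd := Nat.odd_iff.mp hw.1
  let f := I.orderEmbOfFin rfl
  have hmem (k : Fin #I) : f k < w.length ∧ G.Adj x (w.getVert (f k)) := by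
    simpa only [I, mem_filter, mem_range] using I.orderEmbOfFin_mem rfl k
  let k₀ : Fin #I := ⟨0, by omega⟩
  let k₁ : Fin #I := ⟨1, by omega⟩
  let k₂ : Fin #I := ⟨2, by omega⟩
  have h01 : k₀ < k₁ := by simp [k₀, k₁, Fin.lt_def]
  have h12 : k₁ < k₂ := by simp [k₁, k₂, Fin.lt_def]
  have key {k l : Fin #I} (hkl : k < l) :=
    hw.sub_eq_two_or_eq_length_sub_two_of_adj (f.strictMono hkl) (hmem l).1 (hmem k).2 (hmem l).2
  have := key h01
  have := key h12
  have := key (h01.trans h12)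
  have := (hmem k₂).1
  have := f.strictMono h01
  have := f.strictMono h12
  omega

end Walk.IsShortestOddClosedWalk

section Counting

variable [Fintype V] [DecidableRel G.Adj]

theorem CliqueFree.card_edgeFinset_le_sq_div_four (hG : G.CliqueFree 3) :
    #G.edgeFinset ≤ Fintype.card V ^ 2 / 4 := by
  refine (CliqueFree.card_edgeFinset_le (r := 2) hG).trans ?_
  rcases Nat.mod_two_eq_zero_or_one (Fintype.card V) with h | h <;> simp only [h] <;> norm_num
  exact Nat.div_le_div_right (Nat.sub_le _ _)

variable [DecidableEq V]

theorem sum_degree_eq_sum_card_neighborFinset_inter (S : Finset V) :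
    ∑ v ∈ S, G.degree v = ∑ x, #(G.neighborFinset x ∩ S) := by
  have h := sum_card_bipartiteAbove_eq_sum_card_bipartiteBelow G.Adj (s := S) (t := univ)
  convert h using 2 with v _ x
  · rw [← card_neighborFinset_eq_degree, neighborFinset_eq_filter]; rfl
  · congr 1; ext y; simp [bipartiteBelow, G.adj_comm, and_comm]

theorem CliqueFree.sum_card_neighborFinset_inter_self_le (hG : G.CliqueFree 3) (T : Finset V) :
    ∑ v ∈ T, #(G.neighborFinset v ∩ T) ≤ 2 * (#T ^ 2 / 4) := by
  have hT : (G.induce (T : Set V)).CliqueFree 3 := hG.comap ⟨(Embedding.induce _).toCopy⟩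
  calc ∑ v ∈ T, #(G.neighborFinset v ∩ T)
      = ∑ v : (T : Set V), (G.induce (T : Set V)).degree v := by
        rw [← sum_coe_sort]
        refine sum_congr rfl fun v _ => ?_
        rw [← card_neighborFinset_eq_degree, ← card_map (.subtype _)]
        convert (congrArg card (map_neighborFinset_induce (G := G) (s := (T : Set V)) v)).symm
        simp
    _ = 2 * #(G.induce (T : Set V)).edgeFinset := sum_degrees_eq_twice_card_edges _
    _ ≤ 2 * (#T ^ 2 / 4) := by
        grw [hT.card_edgeFinset_le_sq_div_four]
        simp

theorem CliqueFree.two_mul_card_edgeFinset_le (hG : G.CliqueFree 3) (S : Finset V) {d : ℕ}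
    (hd : ∀ x, #(G.neighborFinset x ∩ S) ≤ d) :
    2 * #G.edgeFinset ≤
      d * (2 * Fintype.card V - #S) + 2 * ((Fintype.card V - #S) ^ 2 / 4) := by
  have hS := card_le_univ S
  have hsplit (v : V) :
      G.degree v = #(G.neighborFinset v ∩ S) + #(G.neighborFinset v ∩ Sᶜ) := by
    rw [← card_neighborFinset_eq_degree, ← sdiff_eq_inter_compl, card_inter_add_card_sdiff]
  have hin : ∑ v ∈ S, G.degree v ≤ d * Fintype.card V := by
    rw [sum_degree_eq_sum_card_neighborFinset_inter]
    exact (sum_le_sum fun x _ => hd x).trans (by simp [mul_comm])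
  have hout : ∑ v ∈ Sᶜ, G.degree v ≤ d * #Sᶜ + 2 * (#Sᶜ ^ 2 / 4) := by
    simp only [hsplit, sum_add_distrib]
    gcongr
    · exact (sum_le_sum fun x _ => hd x).trans (by simp [mul_comm])
    · exact hG.sum_card_neighborFinset_inter_self_le Sᶜ
  rw [← sum_degrees_eq_twice_card_edges, ← sum_add_sum_compl S, card_compl] at *
  calc _ ≤ d * Fintype.card V +
        (d * (Fintype.card V - #S) + 2 * ((Fintype.card V - #S) ^ 2 / 4)) := add_le_add hin hout
    _ = _ := by rw [← add_assoc, ← mul_add]; congr 2; omega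

theorem CliqueFree.card_edgeFinset_le_of_not_colorable (hG : G.CliqueFree 3)
    (h : ¬ G.Colorable 2) : #G.edgeFinset ≤ (Fintype.card V - 1) ^ 2 / 4 + 1 := by
  obtain ⟨u, w, hw⟩ := exists_isShortestOddClosedWalk (by
    simpa [two_colorable_iff_forall_loop_even, ← Nat.not_even_iff_odd] using h)
  have hS : #((range w.length).image w.getVert) = w.length :=
    (card_image_of_injOn (by simpa using hw.getVert_injOn)).trans (card_range _)
  have hcount := hG.two_mul_card_edgeFinset_le _ (hw.card_neighborFinset_inter_le_two hG)
  have hlen : w.length ≤ Fintype.card V := hS ▸ card_le_univ _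
  rw [hS] at hcount
  have := Nat.two_mul_sub_add_sq_div_four_le (hw.five_le_length hG) hlen
  omega

theorem CliqueFree.colorable_two_of_sq_div_four_sub_two_le (hG : G.CliqueFree 3)
    (hodd : Odd (Fintype.card V)) (hV : 9 ≤ Fintype.card V)
    (he : Fintype.card V ^ 2 / 4 - 2 ≤ #G.edgeFinset) : G.Colorable 2 := by
  by_contra h
  have hle := hG.card_edgeFinset_le_of_not_colorable h
  obtain ⟨k, hk⟩ := hodd
  rw [hk] at he hle hV
  have : (2 * k + 1) ^ 2 = 4 * (k ^ 2 + k) + 1 := by ring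
  have : (2 * k + 1 - 1) ^ 2 = 4 * k ^ 2 := by rw [Nat.add_sub_cancel]; ring
  omega

end Counting

theorem exists_deleteEdges_eq_of_le {W : Type*} [DecidableEq W] {H K : SimpleGraph W}
    [Fintype H.edgeSet] [Fintype K.edgeSet] (h : H ≤ K) :
    ∃ s : Finset (Sym2 W), #s + #H.edgeFinset = #K.edgeFinset ∧ K.deleteEdges ↑s = H := by
  refine ⟨K.edgeFinset \ H.edgeFinset, ?_, ?_⟩
  · rw [card_sdiff_of_subset (edgeFinset_mono h),
      Nat.sub_add_cancel (card_le_card (edgeFinset_mono h))]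
  · rw [coe_sdiff, coe_edgeFinset, coe_edgeFinset, deleteEdges_sdiff_eq_of_le h]

theorem card_edgeFinset_completeBipartiteGraph (α β : Type*) [Fintype α] [Fintype β]
    [Fintype (completeBipartiteGraph α β).edgeSet] :
    #(completeBipartiteGraph α β).edgeFinset = Fintype.card α * Fintype.card β := by
  have h := encard_edgeSet_completeBipartiteGraph (W₁ := α) (W₂ := β)
  rw [← coe_edgeFinset, Set.encard_coe_eq_coe_finsetCard] at h
  simp only [ENat.card_eq_coe_fintype_card] at h
  exact_mod_cast h

section Bipartite

variable [Fintype V]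

theorem exists_iso_le_completeBipartiteGraph_of_adj {p : V → Prop} [DecidablePred p]
    (hp : ∀ ⦃x y⦄, G.Adj x y → (p x ↔ ¬ p y)) :
    ∃ H : SimpleGraph (Fin (Fintype.card {v // p v}) ⊕ Fin (Fintype.card {v // ¬ p v})),
      H ≤ completeBipartiteGraph _ _ ∧ Nonempty (G ≃g H) := by
  let φ : V ≃ Fin _ ⊕ Fin _ := (Equiv.sumCompl p).symm.trans
    (Equiv.sumCongr (Fintype.equivFin _) (Fintype.equivFin _))
  refine ⟨G.map φ.toEmbedding, ?_, ⟨Iso.map φ G⟩⟩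
  rintro _ _ ⟨-, x, y, hxy, rfl, rfl⟩
  have := hp hxy
  by_cases hx : p x <;> by_cases hy : p y <;> simp_all [φ, Equiv.sumCompl]

theorem Colorable.exists_iso_le_completeBipartiteGraph (h : G.Colorable 2) :
    ∃ a b, a ≤ b ∧ a + b = Fintype.card V ∧ ∃ H : SimpleGraph (Fin a ⊕ Fin b),
      H ≤ completeBipartiteGraph (Fin a) (Fin b) ∧ Nonempty (G ≃g H) := by
  classical
  obtain ⟨C⟩ := h
  have hfin : ∀ a b : Fin 2, a ≠ b → (a = 0 ↔ ¬ b = 0) := by decide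
  have hp : ∀ ⦃x y⦄, G.Adj x y → (C x = 0 ↔ ¬ C y = 0) :=
    fun x y hxy => hfin _ _ (C.valid hxy)
  have hcompl := Fintype.card_subtype_compl (fun v => C v = 0)
  have hle := Fintype.card_subtype_le (fun v => C v = 0)
  rcases le_total (Fintype.card {v // C v = 0}) (Fintype.card {v // ¬ C v = 0}) with hab | hba
  · exact ⟨_, _, hab, by omega, exists_iso_le_completeBipartiteGraph_of_adj hp⟩
  · have hp' : ∀ ⦃x y⦄, G.Adj x y → (¬ C x = 0 ↔ ¬ ¬ C y = 0) := fun x y hxy => by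
      rw [hp hxy, not_not]
    have hnn : Fintype.card {v // ¬ ¬ C v = 0} = Fintype.card {v // C v = 0} :=
      Fintype.card_congr (Equiv.subtypeEquivRight fun _ => not_not)
    exact ⟨_, _, hnn ▸ hba, by omega, exists_iso_le_completeBipartiteGraph_of_adj hp'⟩

end Bipartite

end SimpleGraph

/-- For `n ≥ 11` with `n ≡ 3 (mod 6)`, every triangle-free graph on `n` vertices with
at least `⌊n²/4⌋ - 2` edges is obtained from `K_{⌊n/2⌋,⌈n/2⌉}` by deleting at most two
edges, or is `K_{⌊n/2⌋-1,⌈n/2⌉+1}`. -/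
theorem stmt6 (n : ℕ) (hn : 11 ≤ n) (hmod : n % 6 = 3)
    (G : SimpleGraph (Fin n)) (htf : G.CliqueFree 3)
    (he : n ^ 2 / 4 - 2 ≤ edgeCount G) :
    (∃ s : Finset (Sym2 (Fin (n / 2) ⊕ Fin ((n + 1) / 2))), s.card ≤ 2 ∧
      Nonempty
        (G ≃g (completeBipartiteGraph (Fin (n / 2)) (Fin ((n + 1) / 2))).deleteEdges ↑s)) ∨
    Nonempty (G ≃g completeBipartiteGraph (Fin (n / 2 - 1)) (Fin ((n + 1) / 2 + 1))) := by
  classical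
  have he' : Fintype.card (Fin n) ^ 2 / 4 - 2 ≤ #G.edgeFinset := by
    rwa [Fintype.card_fin, ← edgeCount_eq_card_edgeFinset]
  have hcol := htf.colorable_two_of_sq_div_four_sub_two_le (by simp [Nat.odd_iff]; omega)
    (by simp; omega) he'
  obtain ⟨a, b, hab, hsum, H, hHK, ⟨f⟩⟩ := hcol.exists_iso_le_completeBipartiteGraph
  rw [Fintype.card_fin] at hsum he'
  obtain ⟨s, hs, hsH⟩ := exists_deleteEdges_eq_of_le hHK
  rw [card_edgeFinset_completeBipartiteGraph, Fintype.card_fin, Fintype.card_fin,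
    ← f.card_edgeFinset_eq] at hs
  rcases Nat.eq_add_one_or_eq_add_three_of_sq_div_four_sub_two_le_mul hab (by omega)
    (by rw [hsum]; omega) with ⟨hb, hprod⟩ | ⟨hb, hprod⟩ <;> rw [hsum] at hprod
  · obtain ⟨rfl, rfl⟩ : a = n / 2 ∧ b = (n + 1) / 2 := by omega
    exact Or.inl ⟨s, by omega, ⟨hsH ▸ f⟩⟩
  · obtain ⟨rfl, rfl⟩ : a = n / 2 - 1 ∧ b = (n + 1) / 2 + 1 := by omega
    obtain rfl : s = ∅ := card_eq_zero.mp (by omega)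
    rw [coe_empty, deleteEdges_empty] at hsH
    exact Or.inr ⟨hsH ▸ f⟩
end

section
/- Let X and Y be disjoint finite vertex sets with |X| ≥ 5 and |Y| ≥ 5, and let H be a P_6^2-free graph on vertex set X ∪ Y such that all but at most two of the pairs {x, y} with x ∈ X and y ∈ Y are edges of H. If the induced subgraph H[X] contains a triangle, then Y is an independent set in H. -/
/-!
Suppose `y₁y₂` is an edge inside `Y`. At most two cross pairs are missing, so some
`y₃ ∈ Y ∖ {y₁, y₂}` is joined to all of `X`, some vertex `c` of the triangle is joined to all
of `Y`, and one of the four pairs between the two other triangle vertices and `{y₁, y₂}` is an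
edge, say `b y`. With `a` the last triangle vertex and `{y, y'} = {y₁, y₂}`, the sequence
`y₃, a, b, c, y, y'` spans a `P_6^2`.
-/

open SimpleGraph

theorem Set.exists_mem_notMem_image_of_ncard_lt {ι α : Type*} {M : Set ι} {t : Set α}
    (f : ι → α) (hM : M.Finite) (h : M.ncard < t.ncard) : ∃ a ∈ t, a ∉ f '' M :=
  Set.exists_mem_notMem_of_ncard_lt_ncard ((Set.ncard_image_le hM).trans_lt h) (hM.image f)

section

variable {V : Type*}

def crossNonAdj (H : SimpleGraph V) (X Y : Finset V) : Set (V × V) :=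
  {p | p.1 ∈ X ∧ p.2 ∈ Y ∧ ¬ H.Adj p.1 p.2}

variable {H : SimpleGraph V} {X Y : Finset V}

theorem adj_of_notMem_crossNonAdj {x y : V} (hx : x ∈ X) (hy : y ∈ Y)
    (h : (x, y) ∉ crossNonAdj H X Y) : H.Adj x y :=
  not_not.mp fun hxy => h ⟨hx, hy, hxy⟩

theorem exists_adj_of_ncard_crossNonAdj_lt [Finite V] {s t : Finset V} (hs : s ⊆ X) (ht : t ⊆ Y)
    (h : (crossNonAdj H X Y).ncard < s.card * t.card) : ∃ x ∈ s, ∃ y ∈ t, H.Adj x y := by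
  obtain ⟨⟨x, y⟩, ⟨hx, hy⟩, hxy⟩ := Set.exists_mem_notMem_of_ncard_lt_ncard
    (s := crossNonAdj H X Y) (t := (s : Set V) ×ˢ (t : Set V))
    (by rwa [Set.ncard_prod, Set.ncard_coe_finset, Set.ncard_coe_finset])
  exact ⟨x, hx, y, hy, adj_of_notMem_crossNonAdj (hs hx) (ht hy) hxy⟩

theorem exists_forall_adj_right_of_ncard_crossNonAdj_lt [Finite V] {s : Finset V} (hs : s ⊆ X)
    (h : (crossNonAdj H X Y).ncard < s.card) : ∃ x ∈ s, ∀ y ∈ Y, H.Adj x y := by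
  obtain ⟨x, hx, hxM⟩ := Set.exists_mem_notMem_image_of_ncard_lt Prod.fst
    (M := crossNonAdj H X Y) (t := s) (Set.toFinite _) (by rwa [Set.ncard_coe_finset])
  exact ⟨x, hx, fun y hy => adj_of_notMem_crossNonAdj (hs hx) hy fun hm => hxM ⟨_, hm, rfl⟩⟩

theorem exists_forall_adj_left_of_ncard_crossNonAdj_lt [Finite V] {t : Finset V} (ht : t ⊆ Y)
    (h : (crossNonAdj H X Y).ncard < t.card) : ∃ y ∈ t, ∀ x ∈ X, H.Adj x y := by
  obtain ⟨y, hy, hyM⟩ := Set.exists_mem_notMem_image_of_ncard_lt Prod.snd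
    (M := crossNonAdj H X Y) (t := t) (Set.toFinite _) (by rwa [Set.ncard_coe_finset])
  exact ⟨y, hy, fun x hx => adj_of_notMem_crossNonAdj hx (ht hy) fun hm => hyM ⟨_, hm, rfl⟩⟩

theorem not_p6SqFree_of_adj {G : SimpleGraph V} {v₀ v₁ v₂ v₃ v₄ v₅ : V}
    (h01 : G.Adj v₀ v₁) (h02 : G.Adj v₀ v₂) (h12 : G.Adj v₁ v₂)
    (h13 : G.Adj v₁ v₃) (h23 : G.Adj v₂ v₃) (h24 : G.Adj v₂ v₄)
    (h34 : G.Adj v₃ v₄) (h35 : G.Adj v₃ v₅) (h45 : G.Adj v₄ v₅)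
    (h03 : v₀ ≠ v₃) (h04 : v₀ ≠ v₄) (h05 : v₀ ≠ v₅)
    (h14 : v₁ ≠ v₄) (h15 : v₁ ≠ v₅) (h25 : v₂ ≠ v₅) :
    ¬ P6SqFree G := by
  refine not_not_intro ⟨![v₀, v₁, v₂, v₃, v₄, v₅], ?_, ?_⟩
  · have := h01.ne; have := h02.ne; have := h12.ne; have := h13.ne; have := h23.ne
    have := h24.ne; have := h34.ne; have := h35.ne; have := h45.ne
    intro i j hij
    fin_cases i <;> fin_cases j <;> simp_all [eq_comm]
  · intro i j hlt hle
    fin_cases i <;> fin_cases j <;> simp_all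

theorem not_p6SqFree_of_isNClique [DecidableEq V] {T : Finset V}
    (hdisj : Disjoint X Y) (hT : H.IsNClique 3 T) (hTX : T ⊆ X) {b c y y' y₃ : V}
    (hb : b ∈ T) (hc : c ∈ T) (hbc : b ≠ c) (hy : y ∈ Y) (hy' : y' ∈ Y) (hy₃ : y₃ ∈ Y)
    (hy₃y : y₃ ≠ y) (hy₃y' : y₃ ≠ y') (hy₃X : ∀ x ∈ X, H.Adj x y₃)
    (hcY : ∀ z ∈ Y, H.Adj c z) (hby : H.Adj b y) (hyy' : H.Adj y y') :
    ¬ P6SqFree H := by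
  obtain ⟨a, ha⟩ : ((T.erase c).erase b).Nonempty := by
    rw [← Finset.card_pos, Finset.card_erase_of_mem (Finset.mem_erase.mpr ⟨hbc, hb⟩),
      Finset.card_erase_of_mem hc, hT.card_eq]
    omega
  obtain ⟨hab, hac, ha⟩ : a ≠ b ∧ a ≠ c ∧ a ∈ T := by simpa using ha
  have hXY := Finset.disjoint_iff_ne.mp hdisj
  have haX := hTX ha; have hbX := hTX hb; have hcX := hTX hc
  exact not_p6SqFree_of_adj (hy₃X a haX).symm (hy₃X b hbX).symm (hT.isClique ha hb hab)
    (hT.isClique ha hc hac) (hT.isClique hb hc hbc) hby (hcY y hy) (hcY y' hy') hyy'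
    (hXY c hcX y₃ hy₃).symm hy₃y hy₃y' (hXY a haX y hy) (hXY a haX y' hy') (hXY b hbX y' hy')

end

theorem stmt8_general {V : Type*} [Fintype V] [DecidableEq V] (H : SimpleGraph V)
    (X Y : Finset V) (hdisj : Disjoint X Y)
    (hY : 5 ≤ Y.card) (hfree : P6SqFree H)
    (hmiss : {p : V × V | p.1 ∈ X ∧ p.2 ∈ Y ∧ ¬ H.Adj p.1 p.2}.ncard ≤ 2)
    (htri : ∃ a b c : V, a ∈ X ∧ b ∈ X ∧ c ∈ X ∧ H.Adj a b ∧ H.Adj b c ∧ H.Adj a c) :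
    ∀ y₁ ∈ Y, ∀ y₂ ∈ Y, ¬ H.Adj y₁ y₂ := by
  intro y₁ hy₁ y₂ hy₂ h12
  obtain ⟨a, b, c, ha, hb, hc, hab, hbc, hac⟩ := htri
  set T : Finset V := {a, b, c}
  have hT : H.IsNClique 3 T := SimpleGraph.is3Clique_triple_iff.mpr ⟨hab, hac, hbc⟩
  have hTX : T ⊆ X := by simp [T, Finset.insert_subset_iff, ha, hb, hc]
  obtain ⟨y₃, hy₃, hy₃X⟩ := exists_forall_adj_left_of_ncard_crossNonAdj_lt (H := H)
    ((Finset.erase_subset _ _).trans (Finset.erase_subset y₁ Y)) (hmiss.trans_lt (by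
      rw [Finset.card_erase_of_mem (Finset.mem_erase.mpr ⟨h12.ne', hy₂⟩),
        Finset.card_erase_of_mem hy₁]
      omega))
  obtain ⟨c₀, hc₀, hc₀Y⟩ := exists_forall_adj_right_of_ncard_crossNonAdj_lt (Y := Y) hTX
    (hmiss.trans_lt (by rw [hT.card_eq]; omega))
  obtain ⟨b₀, hb₀, y, hy, hb₀y⟩ := exists_adj_of_ncard_crossNonAdj_lt (t := {y₁, y₂})
    ((Finset.erase_subset c₀ T).trans hTX) (by simp [Finset.insert_subset_iff, hy₁, hy₂])
    (hmiss.trans_lt (by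
      rw [Finset.card_erase_of_mem hc₀, hT.card_eq, Finset.card_pair h12.ne]; omega))
  simp only [Finset.mem_erase, Finset.mem_insert, Finset.mem_singleton] at hy₃ hb₀ hy
  rcases hy with rfl | rfl
  · exact not_p6SqFree_of_isNClique hdisj hT hTX hb₀.2 hc₀ hb₀.1 hy₁ hy₂ hy₃.2.2 hy₃.2.1 hy₃.1
      hy₃X hc₀Y hb₀y h12 hfree
  · exact not_p6SqFree_of_isNClique hdisj hT hTX hb₀.2 hc₀ hb₀.1 hy₂ hy₁ hy₃.2.2 hy₃.1 hy₃.2.1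
      hy₃X hc₀Y hb₀y h12.symm hfree

/-- If `H` is `P_6^2`-free on vertex set `X ∪ Y` (disjoint parts of size `≥ 5`), all but
at most two cross pairs are edges, and `H[X]` contains a triangle, then `Y` is an
independent set in `H`. -/
theorem stmt8 {V : Type*} [Fintype V] [DecidableEq V] (H : SimpleGraph V)
    (X Y : Finset V) (hdisj : Disjoint X Y) (hcover : X ∪ Y = Finset.univ)
    (hX : 5 ≤ X.card) (hY : 5 ≤ Y.card) (hfree : P6SqFree H)
    (hmiss : {p : V × V | p.1 ∈ X ∧ p.2 ∈ Y ∧ ¬ H.Adj p.1 p.2}.ncard ≤ 2)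
    (htri : ∃ a b c : V, a ∈ X ∧ b ∈ X ∧ c ∈ X ∧ H.Adj a b ∧ H.Adj b c ∧ H.Adj a c) :
    ∀ y₁ ∈ Y, ∀ y₂ ∈ Y, ¬ H.Adj y₁ y₂ :=
  stmt8_general H X Y hdisj hY hfree hmiss htri
end

section
/- Let X and Y be disjoint finite vertex sets with |X| ≥ 5 and |Y| ≥ 5, and let H be a P_6^2-free graph on vertex set X ∪ Y such that all but at most two of the pairs {x, y} with x ∈ X and y ∈ Y are edges of H. If the induced subgraph H[X] contains a triangle, then the number of triangles of H satisfies t(H) ≤ |X|·|Y| + ⌊|X|/3⌋. -/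
open SimpleGraph

/-!
Pick two vertices of `Y` adjacent to all of `X` (at most two vertices of `Y` miss an edge).
Together with a path `p - q - r - s` inside `X` they would span a `P_6^2` (`y₁ p q y₄ r s`),
so `H[X]` has no path on four vertices: its triangles are vertex-disjoint and, as
`1 / d(u) + 1 / d(v) ≥ 1` on each of its edges `uv`, it has at most `|X|` edges. If `Y` contained
an edge `y y'`, a triangle of `H[X]` and a third vertex `z` of `Y` complete to `X` would again give
a `P_6^2` (`y y' p q r z`), so `Y` is independent and every triangle meeting `Y` is an edge of
`H[X]` plus one vertex of `Y`.
-/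

open Finset

namespace SimpleGraph

variable {W : Type*} (G : SimpleGraph W)

/-- `G` contains no path on four vertices; the adjacencies already give `p ≠ q`, `q ≠ r`, `r ≠ s`,
so a walk `p - q - r - s` with `p ≠ r` and `q ≠ s` must close up into a triangle. -/
def PathFourFree : Prop :=
  ∀ ⦃p q r s : W⦄, G.Adj p q → G.Adj q r → G.Adj r s → p ≠ r → q ≠ s → p = s

variable {G}

namespace PathFourFree

section Degree

variable [Fintype W] [DecidableRel G.Adj]

theorem degree_le_two (hG : G.PathFourFree) {v w : W} (hvw : G.Adj v w) (hw : 2 ≤ G.degree w) :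
    G.degree v ≤ 2 := by
  classical
  obtain ⟨z, hz, hzv⟩ := exists_mem_ne (s := G.neighborFinset w) hw v
  rw [mem_neighborFinset] at hz
  have hsub : G.neighborFinset v ⊆ {w, z} := by
    intro x hx
    rw [mem_neighborFinset] at hx
    by_contra hxwz
    simp only [mem_insert, mem_singleton, not_or] at hxwz
    exact hxwz.2 (hG hx.symm hvw hz hxwz.1 hzv.symm)
  calc G.degree v = #(G.neighborFinset v) := (card_neighborFinset_eq_degree G v).symm
    _ ≤ #{w, z} := card_le_card hsub
    _ ≤ 2 := card_le_two

theorem one_le_inv_degree_add_inv_degree (hG : G.PathFourFree) {v w : W} (hvw : G.Adj v w) :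
    1 ≤ (G.degree v : ℚ)⁻¹ + (G.degree w : ℚ)⁻¹ := by
  have hv : 0 < G.degree v := G.degree_pos_iff_exists_adj v |>.mpr ⟨w, hvw⟩
  have hw : 0 < G.degree w := G.degree_pos_iff_exists_adj w |>.mpr ⟨v, hvw.symm⟩
  rcases Nat.lt_or_ge (G.degree v) 2 with hv2 | hv2
  · rw [show G.degree v = 1 by omega]
    simp
  rcases Nat.lt_or_ge (G.degree w) 2 with hw2 | hw2
  · rw [show G.degree w = 1 by omega]
    simp
  rw [le_antisymm (hG.degree_le_two hvw hw2) hv2, le_antisymm (hG.degree_le_two hvw.symm hv2) hw2]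
  norm_num

theorem card_edgeFinset_le [DecidableEq W] (hG : G.PathFourFree) :
    #G.edgeFinset ≤ Fintype.card W := by
  have hhalf : ∑ v, ∑ _w ∈ G.neighborFinset v, (G.degree v : ℚ)⁻¹ ≤ Fintype.card W :=
    calc ∑ v, ∑ _w ∈ G.neighborFinset v, (G.degree v : ℚ)⁻¹
        = ∑ v, (G.degree v : ℚ) * (G.degree v : ℚ)⁻¹ := by simp
      _ ≤ ∑ _v : W, 1 := sum_le_sum fun _ _ ↦ mul_inv_le_one
      _ = Fintype.card W := by simp
  have hswap : ∑ v, ∑ w ∈ G.neighborFinset v, (G.degree w : ℚ)⁻¹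
      = ∑ w, ∑ _v ∈ G.neighborFinset w, (G.degree w : ℚ)⁻¹ :=
    sum_comm' (by simp [adj_comm])
  have htwice : (2 * #G.edgeFinset : ℚ) ≤ 2 * Fintype.card W :=
    calc (2 * #G.edgeFinset : ℚ) = ∑ v, ∑ _w ∈ G.neighborFinset v, (1 : ℚ) := by
          simp only [sum_const, card_neighborFinset_eq_degree, nsmul_one]
          exact_mod_cast (sum_degrees_eq_twice_card_edges G).symm
      _ ≤ ∑ v, ∑ w ∈ G.neighborFinset v, ((G.degree v : ℚ)⁻¹ + (G.degree w : ℚ)⁻¹) := by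
        gcongr with v _ w hw
        exact hG.one_le_inv_degree_add_inv_degree ((mem_neighborFinset G v w).mp hw)
      _ ≤ 2 * Fintype.card W := by
        simp only [sum_add_distrib, hswap]
        linarith
  exact_mod_cast (by linarith : (#G.edgeFinset : ℚ) ≤ Fintype.card W)

end Degree

theorem disjoint_of_isNClique_three (hG : G.PathFourFree) {s t : Finset W}
    (hs : G.IsNClique 3 s) (ht : G.IsNClique 3 t) (hst : s ≠ t) : Disjoint s t := by
  classical
  by_contra hmeet
  obtain ⟨x, hxs, hxt⟩ := not_disjoint_iff.mp hmeet
  obtain ⟨d, hdt, hds⟩ : ∃ d ∈ t, d ∉ s := not_subset.mp fun hts ↦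
    hst (eq_of_subset_of_card_le hts (by rw [hs.card_eq, ht.card_eq])).symm
  obtain ⟨b, c, hbc, hsx⟩ := card_eq_two.mp (by rw [card_erase_of_mem hxs, hs.card_eq] :
    #(s.erase x) = 2)
  have hb : b ∈ s.erase x := by simp [hsx]
  have hc : c ∈ s.erase x := by simp [hsx]
  rw [mem_erase] at hb hc
  have hdx : G.Adj d x := ht.isClique hdt hxt (ne_of_mem_of_not_mem hxs hds).symm
  have hdc := hG hdx (hs.isClique hxs hb.2 hb.1.symm) (hs.isClique hb.2 hc.2 hbc)
    (ne_of_mem_of_not_mem hb.2 hds).symm hc.1.symm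
  exact hds (hdc ▸ hc.2)

theorem three_mul_card_cliqueFinset_le [Fintype W] [DecidableEq W] [DecidableRel G.Adj]
    (hG : G.PathFourFree) : 3 * #(G.cliqueFinset 3) ≤ Fintype.card W :=
  calc 3 * #(G.cliqueFinset 3) = ∑ t ∈ G.cliqueFinset 3, #t := by
        rw [sum_congr rfl fun t ht ↦ (mem_cliqueFinset_iff.mp ht).card_eq, sum_const, smul_eq_mul,
          mul_comm]
    _ = #((G.cliqueFinset 3).biUnion id) := by
        refine (card_biUnion fun s hs t ht hst ↦ ?_).symm
        exact hG.disjoint_of_isNClique_three (mem_cliqueFinset_iff.mp hs)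
          (mem_cliqueFinset_iff.mp ht) hst
    _ ≤ Fintype.card W := card_le_univ _

end PathFourFree

variable {V : Type*} [Fintype V] [DecidableEq V] {H : SimpleGraph V} [DecidableRel H.Adj]

theorem card_cliqueFinset_three_le {X Y : Finset V} (hcover : X ∪ Y = univ)
    (hX : (H.induce (X : Set V)).PathFourFree) (hY : ∀ y ∈ Y, ∀ y' ∈ Y, ¬ H.Adj y y') :
    #(H.cliqueFinset 3) ≤ #X * #Y + #X / 3 := by
  classical
  set G := H.induce (X : Set V)
  have hinside : #{t ∈ H.cliqueFinset 3 | t ⊆ X} ≤ #(G.cliqueFinset 3) := by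
    refine card_le_card_of_surjOn (·.map (Function.Embedding.subtype _)) fun t ht ↦ ?_
    obtain ⟨htH, htX⟩ := mem_filter.mp ht
    have hmap : (t.subtype (· ∈ (X : Set V))).map (Function.Embedding.subtype _) = t :=
      subtype_map_of_mem htX
    refine ⟨t.subtype (· ∈ (X : Set V)), ?_, hmap⟩
    rw [mem_coe, mem_cliqueFinset_iff, isNClique_induce_iff, hmap]
    exact mem_cliqueFinset_iff.mp htH
  have houtside : #{t ∈ H.cliqueFinset 3 | ¬ t ⊆ X} ≤ #(G.edgeFinset ×ˢ Y) := by
    refine card_le_card_of_surjOn (fun ey ↦ insert ey.2 (ey.1.map Subtype.val).toFinset)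
      fun t ht ↦ ?_
    obtain ⟨htH, htX⟩ := mem_filter.mp ht
    rw [mem_cliqueFinset_iff] at htH
    obtain ⟨y, hyt, hyX⟩ := not_subset.mp htX
    have hyY : y ∈ Y := (mem_union.mp (hcover ▸ mem_univ y)).resolve_left hyX
    obtain ⟨a, b, hab, hty⟩ := card_eq_two.mp (by rw [card_erase_of_mem hyt, htH.card_eq] :
      #(t.erase y) = 2)
    have ha : a ∈ t.erase y := by simp [hty]
    have hb : b ∈ t.erase y := by simp [hty]
    rw [mem_erase] at ha hb
    have hmemX : ∀ x ∈ t, x ≠ y → x ∈ X := fun x hx hxy ↦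
      (mem_union.mp (hcover ▸ mem_univ x)).resolve_right
        fun hxY ↦ hY x hxY y hyY (htH.isClique hx hyt hxy)
    refine ⟨(s(⟨a, hmemX a ha.2 ha.1⟩, ⟨b, hmemX b hb.2 hb.1⟩), y), ?_, ?_⟩
    · simp only [coe_product, Set.mem_prod, mem_coe, mem_edgeFinset, mem_edgeSet]
      exact ⟨htH.isClique ha.2 hb.2 hab, hyY⟩
    · simp only [Sym2.map_mk, Sym2.toFinset_mk_eq, ← hty, insert_erase hyt]
  have hG₃ := hX.three_mul_card_cliqueFinset_le
  have hG₂ := hX.card_edgeFinset_le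
  simp only [coe_sort_coe, Fintype.card_coe] at hG₃ hG₂
  rw [card_product] at houtside
  rw [← card_filter_add_card_filter_not (· ⊆ X)]
  have := Nat.mul_le_mul_right #Y hG₂
  omega

end SimpleGraph

section P6SqFree

variable {V : Type*} {H : SimpleGraph V}

theorem P6SqFree.false_of_adj (hH : P6SqFree H) {v₁ v₂ v₃ v₄ v₅ v₆ : V}
    (h₁₂ : H.Adj v₁ v₂) (h₁₃ : H.Adj v₁ v₃) (h₂₃ : H.Adj v₂ v₃) (h₂₄ : H.Adj v₂ v₄)
    (h₃₄ : H.Adj v₃ v₄) (h₃₅ : H.Adj v₃ v₅) (h₄₅ : H.Adj v₄ v₅) (h₄₆ : H.Adj v₄ v₆)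
    (h₅₆ : H.Adj v₅ v₆) (n₁₄ : v₁ ≠ v₄) (n₁₅ : v₁ ≠ v₅) (n₁₆ : v₁ ≠ v₆) (n₂₅ : v₂ ≠ v₅)
    (n₂₆ : v₂ ≠ v₆) (n₃₆ : v₃ ≠ v₆) : False := by
  refine hH ⟨![v₁, v₂, v₃, v₄, v₅, v₆], fun i j hij ↦ ?_, fun i j hij hji ↦ ?_⟩
  · fin_cases i <;> fin_cases j <;> simp_all
  · fin_cases i <;> fin_cases j <;> simp_all

theorem P6SqFree.pathFourFree_induce (hH : P6SqFree H) {S : Set V} {y₁ y₂ : V} (hy : y₁ ≠ y₂)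
    (h₁ : ∀ x ∈ S, H.Adj x y₁) (h₂ : ∀ x ∈ S, H.Adj x y₂) : (H.induce S).PathFourFree := by
  intro p q r s hpq hqr hrs hpr hqs
  by_contra hps
  exact hH.false_of_adj (h₁ p p.2).symm (h₁ q q.2).symm hpq (h₂ p p.2) (h₂ q q.2) hqr
    (h₂ r r.2).symm (h₂ s s.2).symm hrs hy (h₁ r r.2).ne.symm (h₁ s s.2).ne.symm
    (Subtype.val_injective.ne hpr) (Subtype.val_injective.ne hps) (Subtype.val_injective.ne hqs)

section AlmostCompleteBipartite

variable [DecidableEq V] [DecidableRel H.Adj] {X Y : Finset V} {M : Finset (V × V)}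

theorem card_le_card_filter_forall_adj_add_two (hM : #M ≤ 2)
    (hadj : ∀ x ∈ X, ∀ y ∈ Y, (x, y) ∉ M → H.Adj x y) :
    #Y ≤ #{y ∈ Y | ∀ x ∈ X, H.Adj x y} + 2 := by
  have hsub : Y ⊆ {y ∈ Y | ∀ x ∈ X, H.Adj x y} ∪ M.image Prod.snd := fun y hy ↦ by
    by_cases hyM : y ∈ M.image Prod.snd
    · exact mem_union_right _ hyM
    · exact mem_union_left _ <| mem_filter.mpr
        ⟨hy, fun x hx ↦ hadj x hx y hy fun hxy ↦ hyM (mem_image_of_mem _ hxy)⟩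
  grw [card_le_card hsub, card_union_le, card_image_le, hM]

theorem P6SqFree.pathFourFree_induce_of_card_missing_le (hH : P6SqFree H) (hY : 4 ≤ #Y)
    (hM : #M ≤ 2) (hadj : ∀ x ∈ X, ∀ y ∈ Y, (x, y) ∉ M → H.Adj x y) :
    (H.induce (X : Set V)).PathFourFree := by
  obtain ⟨y₁, hy₁, y₂, hy₂, hy⟩ := one_lt_card.mp
    (by have := card_le_card_filter_forall_adj_add_two hM hadj; omega :
      1 < #{y ∈ Y | ∀ x ∈ X, H.Adj x y})
  exact hH.pathFourFree_induce hy (mem_filter.mp hy₁).2 (mem_filter.mp hy₂).2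

theorem P6SqFree.not_adj_of_isNClique_three (hH : P6SqFree H) (hdisj : Disjoint X Y)
    (hY : 5 ≤ #Y) (hM : #M ≤ 2) (hadj : ∀ x ∈ X, ∀ y ∈ Y, (x, y) ∉ M → H.Adj x y)
    {t : Finset V} (ht : H.IsNClique 3 t) (htX : t ⊆ X) {y y' : V} (hy : y ∈ Y) (hy' : y' ∈ Y) :
    ¬ H.Adj y y' := by
  intro hyy'
  have hXY : ∀ x ∈ X, ∀ v ∈ Y, x ≠ v := fun x hx v hv hxv ↦ disjoint_left.mp hdisj hx (hxv ▸ hv)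
  obtain ⟨p, hpt, hpM⟩ := exists_mem_notMem_of_card_lt_card (s := M.image Prod.fst) (t := t)
    (by grw [card_image_le, hM, ht.card_eq]; norm_num)
  have hp : ∀ v ∈ Y, H.Adj p v := fun v hv ↦
    hadj p (htX hpt) v hv fun hpv ↦ hpM (mem_image_of_mem _ hpv)
  obtain ⟨⟨q, w⟩, hqw, hqwM⟩ := exists_mem_notMem_of_card_lt_card (s := M)
    (t := t.erase p ×ˢ {y, y'})
    (by rw [card_product, card_erase_of_mem hpt, ht.card_eq, card_pair hyy'.ne]; omega)
  obtain ⟨hqt, hw⟩ := mem_product.mp hqw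
  obtain ⟨hqp, hqt⟩ := mem_erase.mp hqt
  have hwY : w ∈ Y := by rcases mem_insert.mp hw with rfl | hw <;> simp_all
  have hq : H.Adj w q := (hadj q (htX hqt) w hwY hqwM).symm
  obtain ⟨r, hr⟩ : ((t.erase p).erase q).Nonempty := by
    rw [← card_pos, card_erase_of_mem (mem_erase.mpr ⟨hqp, hqt⟩), card_erase_of_mem hpt,
      ht.card_eq]
    norm_num
  obtain ⟨hrq, hrp, hrt⟩ := by simpa only [mem_erase] using hr
  obtain ⟨z, hz, hzyy'⟩ := exists_mem_notMem_of_card_lt_card (s := {y, y'})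
    (t := {v ∈ Y | ∀ x ∈ X, H.Adj x v})
    (by have := card_le_card_filter_forall_adj_add_two hM hadj; grw [card_le_two]; omega)
  obtain ⟨hzY, hzX⟩ := mem_filter.mp hz
  have key : ∀ u ∈ Y, H.Adj u w → u ≠ z → w ≠ z → False := fun u hu huw huz hwz ↦
    hH.false_of_adj huw (hp u hu).symm (hp w hwY).symm hq (ht.isClique hpt hqt hqp.symm)
      (ht.isClique hpt hrt hrp.symm) (ht.isClique hqt hrt hrq.symm) (hzX q (htX hqt))
      (hzX r (htX hrt)) (hXY q (htX hqt) u hu).symm (hXY r (htX hrt) u hu).symm huz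
      (hXY r (htX hrt) w hwY).symm hwz (hXY p (htX hpt) z hzY)
  simp only [mem_insert, mem_singleton, not_or] at hw hzyy'
  rcases hw with rfl | rfl
  · exact key y' hy' hyy'.symm (Ne.symm hzyy'.2) (Ne.symm hzyy'.1)
  · exact key y hy hyy' (Ne.symm hzyy'.1) (Ne.symm hzyy'.2)

end AlmostCompleteBipartite

end P6SqFree

theorem stmt9_general {V : Type*} [Fintype V] [DecidableEq V] (H : SimpleGraph V)
    (X Y : Finset V) (hdisj : Disjoint X Y) (hcover : X ∪ Y = Finset.univ)
    (hY : 5 ≤ Y.card) (hfree : P6SqFree H)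
    (hmiss : {p : V × V | p.1 ∈ X ∧ p.2 ∈ Y ∧ ¬ H.Adj p.1 p.2}.ncard ≤ 2)
    (htri : ∃ a b c : V, a ∈ X ∧ b ∈ X ∧ c ∈ X ∧ H.Adj a b ∧ H.Adj b c ∧ H.Adj a c) :
    triCount H ≤ X.card * Y.card + X.card / 3 := by
  classical
  obtain ⟨a, b, c, ha, hb, hc, hab, hbc, hac⟩ := htri
  set M : Finset (V × V) := {p ∈ X ×ˢ Y | ¬ H.Adj p.1 p.2}
  have hM : #M ≤ 2 := by
    rw [← Set.ncard_coe_finset]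
    convert hmiss using 2
    ext
    simp [M, and_assoc]
  have hadj : ∀ x ∈ X, ∀ y ∈ Y, (x, y) ∉ M → H.Adj x y := fun x hx y hy hxy ↦
    by_contra fun h ↦ hxy (by simp [M, hx, hy, h])
  have htriangle : H.IsNClique 3 {a, b, c} := is3Clique_triple_iff.mpr ⟨hab, hac, hbc⟩
  exact card_cliqueFinset_three_le hcover
    (hfree.pathFourFree_induce_of_card_missing_le (by omega) hM hadj)
    fun y hy y' hy' ↦ hfree.not_adj_of_isNClique_three hdisj hY hM hadj htriangle
      (by simp [insert_subset_iff, ha, hb, hc]) hy hy'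

/-- If `H` is `P_6^2`-free on vertex set `X ∪ Y` (disjoint parts of size `≥ 5`), all but
at most two cross pairs are edges, and `H[X]` contains a triangle, then
`t(H) ≤ |X|·|Y| + ⌊|X|/3⌋`. -/
theorem stmt9 {V : Type*} [Fintype V] [DecidableEq V] (H : SimpleGraph V)
    (X Y : Finset V) (hdisj : Disjoint X Y) (hcover : X ∪ Y = Finset.univ)
    (hX : 5 ≤ X.card) (hY : 5 ≤ Y.card) (hfree : P6SqFree H)
    (hmiss : {p : V × V | p.1 ∈ X ∧ p.2 ∈ Y ∧ ¬ H.Adj p.1 p.2}.ncard ≤ 2)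
    (htri : ∃ a b c : V, a ∈ X ∧ b ∈ X ∧ c ∈ X ∧ H.Adj a b ∧ H.Adj b c ∧ H.Adj a c) :
    triCount H ≤ X.card * Y.card + X.card / 3 :=
  stmt9_general H X Y hdisj hcover hY hfree hmiss htri
end

section
/- Let G be a P_6^2-free graph containing five distinct vertices u_1, u_2, u_3, u_4, u_5 such that every pair among them is adjacent except possibly the pair {u_4, u_5} (i.e., G contains a copy of K_5 minus one edge). Then there is no vertex v outside {u_1, u_2, u_3, u_4, u_5} such that v, u_2, u_4 are pairwise adjacent. -/
open SimpleGraph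

theorem P6SqFree.false_of_squarePath_s12 {V : Type*} {G : SimpleGraph V} (hG : P6SqFree G)
    {a b c d e f : V} (hnd : [a, b, c, d, e, f].Nodup)
    (hab : G.Adj a b) (hac : G.Adj a c) (hbc : G.Adj b c) (hbd : G.Adj b d)
    (hcd : G.Adj c d) (hce : G.Adj c e) (hde : G.Adj d e) (hdf : G.Adj d f)
    (hef : G.Adj e f) : False :=
  hG ⟨![a, b, c, d, e, f], List.nodup_ofFn.mp hnd, by
    intro i j hij hji
    fin_cases i <;> fin_cases j <;> first | assumption | simp at hij hji⟩

theorem stmt12_general {V : Type*} (G : SimpleGraph V) (hfree : P6SqFree G)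
    (u₁ u₂ u₃ u₄ u₅ : V) (hdist : List.Pairwise (· ≠ ·) [u₁, u₂, u₃, u₄, u₅])
    (h12 : G.Adj u₁ u₂) (h13 : G.Adj u₁ u₃) (h14 : G.Adj u₁ u₄) (h15 : G.Adj u₁ u₅)
    (h23 : G.Adj u₂ u₃) (h24 : G.Adj u₂ u₄)
    (h35 : G.Adj u₃ u₅) :
    ¬ ∃ v : V, v ∉ ({u₁, u₂, u₃, u₄, u₅} : Set V) ∧ G.Adj v u₂ ∧ G.Adj v u₄ := by
  rintro ⟨v, hv, hv2, hv4⟩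
  have hnd : [v, u₄, u₂, u₁, u₃, u₅].Nodup := by
    simp only [Set.mem_insert_iff, Set.mem_singleton_iff] at hv
    simp only [← List.nodup_iff_pairwise_ne, List.nodup_cons, List.mem_cons,
      List.not_mem_nil] at hdist ⊢
    grind
  exact hfree.false_of_squarePath_s12 hnd hv4 hv2 h24.symm h14.symm h12.symm h23 h13 h15 h35

/-- In a `P_6^2`-free graph containing a copy of `K_5` minus the edge `u₄u₅`, no outside
vertex forms a triangle with `u₂` and `u₄`. -/
theorem stmt12 {V : Type*} (G : SimpleGraph V) (hfree : P6SqFree G)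
    (u₁ u₂ u₃ u₄ u₅ : V) (hdist : List.Pairwise (· ≠ ·) [u₁, u₂, u₃, u₄, u₅])
    (h12 : G.Adj u₁ u₂) (h13 : G.Adj u₁ u₃) (h14 : G.Adj u₁ u₄) (h15 : G.Adj u₁ u₅)
    (h23 : G.Adj u₂ u₃) (h24 : G.Adj u₂ u₄) (h25 : G.Adj u₂ u₅)
    (h34 : G.Adj u₃ u₄) (h35 : G.Adj u₃ u₅) :
    ¬ ∃ v : V, v ∉ ({u₁, u₂, u₃, u₄, u₅} : Set V) ∧ G.Adj v u₂ ∧ G.Adj v u₄ :=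
  stmt12_general G hfree u₁ u₂ u₃ u₄ u₅ hdist h12 h13 h14 h15 h23 h24 h35
end

section
/- Let G be a P_6^2-free graph containing six distinct vertices u_1, …, u_6 such that u_1, u_2, u_3 are pairwise adjacent, u_4 is adjacent to u_1 and u_2, u_5 is adjacent to u_1 and u_3, and u_6 is adjacent to u_2 and u_3 (so these six vertices contain a copy of the triangular pyramid TP_2 with central triangle u_1u_2u_3). Then the three vertices u_4, u_5, u_6 are pairwise non-adjacent in G. -/
/-! If two outer vertices of `TP₂`, say those over `u₁u₂` and `u₁u₃`, were adjacent, then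
`u₆, u₂, u₃, u₁, u₅, u₄` would span a copy of `P₆²`: consecutive vertices and vertices two
apart along this order are all adjacent. The other two pairs follow by symmetry of `TP₂`. -/

open SimpleGraph

namespace P6SqFree

variable {V : Type*} {G : SimpleGraph V}

theorem not_adj_of_square_path (hG : P6SqFree G) {a b c d e f : V}
    (hl : [a, b, c, d, e, f].Nodup) (hab : G.Adj a b) (hac : G.Adj a c) (hbc : G.Adj b c)
    (hbd : G.Adj b d) (hcd : G.Adj c d) (hce : G.Adj c e) (hde : G.Adj d e)
    (hdf : G.Adj d f) : ¬ G.Adj e f := fun hef => by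
  refine hG ⟨![a, b, c, d, e, f], List.nodup_ofFn.1 hl, fun i j hij hji => ?_⟩
  fin_cases i <;> fin_cases j <;> simp_all

theorem not_adj_of_triangularPyramid (hG : P6SqFree G) {a b c x y z : V}
    (hl : [a, b, c, x, y, z].Nodup) (hab : G.Adj a b) (hac : G.Adj a c) (hbc : G.Adj b c)
    (hxa : G.Adj x a) (hya : G.Adj y a) (hyc : G.Adj y c) (hzb : G.Adj z b)
    (hzc : G.Adj z c) : ¬ G.Adj x y := fun hxy =>
  hG.not_adj_of_square_path (a := z) (b := b) (c := c) (d := a) (e := y) (f := x) (by grind)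
    hzb hzc hbc hab.symm hac.symm hyc.symm hya.symm hxa.symm hxy.symm

end P6SqFree

/-- In a `P_6^2`-free graph containing a copy of `TP_2` with central triangle `u₁u₂u₃`
and outer vertices `u₄, u₅, u₆`, the outer vertices are pairwise non-adjacent. -/
theorem stmt16 {V : Type*} (G : SimpleGraph V) (hfree : P6SqFree G)
    (u₁ u₂ u₃ u₄ u₅ u₆ : V) (hdist : List.Pairwise (· ≠ ·) [u₁, u₂, u₃, u₄, u₅, u₆])
    (h12 : G.Adj u₁ u₂) (h13 : G.Adj u₁ u₃) (h23 : G.Adj u₂ u₃)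
    (h41 : G.Adj u₄ u₁) (h42 : G.Adj u₄ u₂)
    (h51 : G.Adj u₅ u₁) (h53 : G.Adj u₅ u₃)
    (h62 : G.Adj u₆ u₂) (h63 : G.Adj u₆ u₃) :
    ¬ G.Adj u₄ u₅ ∧ ¬ G.Adj u₄ u₆ ∧ ¬ G.Adj u₅ u₆ := by
  have hl : [u₁, u₂, u₃, u₄, u₅, u₆].Nodup := hdist
  exact ⟨hfree.not_adj_of_triangularPyramid hl h12 h13 h23 h41 h51 h53 h62 h63,
    hfree.not_adj_of_triangularPyramid (by grind) h12.symm h23 h13 h42 h62 h63 h51 h53,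
    hfree.not_adj_of_triangularPyramid (by grind) h13.symm h23.symm h12 h53 h63 h62 h41 h42⟩
end

section
/- Let G be a P_6^2-free graph containing six distinct vertices u_1, …, u_6 such that u_1, u_2, u_3 are pairwise adjacent, u_4 is adjacent to u_1 and u_2, u_5 is adjacent to u_1 and u_3, and u_6 is adjacent to u_2 and u_3. Then there is no vertex v outside {u_1, u_2, u_3, u_4, u_5, u_6} such that v, u_1, u_4 are pairwise adjacent. -/
open SimpleGraph

theorem not_p6SqFree_of_nodup_of_adj {V : Type*} {G : SimpleGraph V} {a b c d e f : V}
    (hnodup : [a, b, c, d, e, f].Nodup)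
    (hab : G.Adj a b) (hac : G.Adj a c) (hbc : G.Adj b c) (hbd : G.Adj b d) (hcd : G.Adj c d)
    (hce : G.Adj c e) (hde : G.Adj d e) (hdf : G.Adj d f) (hef : G.Adj e f) :
    ¬ P6SqFree G := by
  refine not_not_intro ⟨[a, b, c, d, e, f].get, List.nodup_iff_injective_get.mp hnodup, ?_⟩
  intro i j hij hji
  fin_cases i <;> fin_cases j <;> first | assumption | simp at hij hji

theorem stmt17_general {V : Type*} (G : SimpleGraph V) (hfree : P6SqFree G)
    (u₁ u₂ u₃ u₄ u₅ u₆ : V) (hdist : List.Pairwise (· ≠ ·) [u₁, u₂, u₃, u₄, u₅, u₆])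
    (h12 : G.Adj u₁ u₂) (h13 : G.Adj u₁ u₃) (h23 : G.Adj u₂ u₃)
    (h41 : G.Adj u₄ u₁) (h42 : G.Adj u₄ u₂)
    (h62 : G.Adj u₆ u₂) (h63 : G.Adj u₆ u₃) :
    ¬ ∃ v : V, v ∉ ({u₁, u₂, u₃, u₄, u₅, u₆} : Set V) ∧ G.Adj v u₁ ∧ G.Adj v u₄ := by
  rintro ⟨v, hv, hv1, hv4⟩
  have hsub : [u₁, u₂, u₃, u₄, u₆].Nodup := hdist.sublist (by simp)
  have hnodup : [v, u₄, u₁, u₂, u₃, u₆].Nodup := by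
    refine List.nodup_cons.2 ⟨by simp_all, ?_⟩
    exact (List.perm_middle (l₁ := [u₁, u₂, u₃]) (l₂ := [u₆])).nodup_iff.1 hsub
  exact not_p6SqFree_of_nodup_of_adj hnodup hv4 hv1 h41 h42 h12 h13 h23 h62.symm h63.symm hfree

/-- In a `P_6^2`-free graph containing a copy of `TP_2` with central triangle `u₁u₂u₃`
and outer vertices `u₄, u₅, u₆`, no outside vertex forms a triangle with `u₁` and `u₄`. -/
theorem stmt17 {V : Type*} (G : SimpleGraph V) (hfree : P6SqFree G)
    (u₁ u₂ u₃ u₄ u₅ u₆ : V) (hdist : List.Pairwise (· ≠ ·) [u₁, u₂, u₃, u₄, u₅, u₆])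
    (h12 : G.Adj u₁ u₂) (h13 : G.Adj u₁ u₃) (h23 : G.Adj u₂ u₃)
    (h41 : G.Adj u₄ u₁) (h42 : G.Adj u₄ u₂)
    (h51 : G.Adj u₅ u₁) (h53 : G.Adj u₅ u₃)
    (h62 : G.Adj u₆ u₂) (h63 : G.Adj u₆ u₃) :
    ¬ ∃ v : V, v ∉ ({u₁, u₂, u₃, u₄, u₅, u₆} : Set V) ∧ G.Adj v u₁ ∧ G.Adj v u₄ :=
  stmt17_general G hfree u₁ u₂ u₃ u₄ u₅ u₆ hdist h12 h13 h23 h41 h42 h62 h63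
end
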